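/- arXiv:math/0307241 — 8 statements merged into one kernel-verified Lean document; each statement's English description precedes it below -/
import Mathlib

section
/- Let C: F_0, ..., F_n be an irredundant chain in a simplicial complex. Then F_p ∩ F_q = ∅ for any p and any q not in {p-1, p, p+1}. Furthermore, F_i is not a leaf of the subcomplex generated by F_0, ..., F_n for any i = 1, ..., n-1. -/
variable {V : Type} [DecidableEq V]

/-- A simplicial complex presented by its (finite) set of facets: the facets are
nonempty and form an antichain under inclusion (facets are the maximal faces). -/
def IsComplex (Δ : Finset (Finset V)) : Prop :=
  (∀ F ∈ Δ, F.Nonempty) ∧ ∀ F ∈ Δ, ∀ G ∈ Δ, F ⊆ G → F = G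

/-- `c 0, c 1, …, c n` is a chain of facets of `Δ`: consecutive members intersect
nontrivially. -/
def IsChainSeq (Δ : Finset (Finset V)) (c : ℕ → Finset V) (n : ℕ) : Prop :=
  (∀ i ≤ n, c i ∈ Δ) ∧ ∀ i < n, (c i ∩ c (i + 1)).Nonempty

/-- A proper chain: a chain with `dim (c i ∩ c (i+1)) = dim (c (i+1)) - 1` for all `i`
(expressed via cardinalities), going from a facet of larger (or equal) dimension to one of
smaller dimension. -/
def IsProperChainSeq (Δ : Finset (Finset V)) (c : ℕ → Finset V) (n : ℕ) : Prop :=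
  IsChainSeq Δ c n ∧ (c n).card ≤ (c 0).card ∧
    ∀ i < n, (c i ∩ c (i + 1)).card + 1 = (c (i + 1)).card

/-- An irredundant chain: no proper subsequence (with the same endpoints) is again a chain. -/
def IsIrredChainSeq (Δ : Finset (Finset V)) (c : ℕ → Finset V) (n : ℕ) : Prop :=
  IsChainSeq Δ c n ∧ ∀ m < n, ∀ g : ℕ → ℕ, StrictMonoOn g (Set.Iic m) →
    g 0 = 0 → g m = n → ¬ IsChainSeq Δ (c ∘ g) m

/-- An irredundant proper chain: no proper subsequence (with the same endpoints) is again a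
proper chain. -/
def IsIrredProperChainSeq (Δ : Finset (Finset V)) (c : ℕ → Finset V) (n : ℕ) : Prop :=
  IsProperChainSeq Δ c n ∧ ∀ m < n, ∀ g : ℕ → ℕ, StrictMonoOn g (Set.Iic m) →
    g 0 = 0 → g m = n → ¬ IsProperChainSeq Δ (c ∘ g) m

/-- `F` is a leaf of the complex with facet set `Δ`. -/
def IsLeaf (Δ : Finset (Finset V)) (F : Finset V) : Prop :=
  F ∈ Δ ∧ (Δ = {F} ∨ ∃ G ∈ Δ, G ≠ F ∧ ∀ H ∈ Δ, H ≠ F → F ∩ H ⊆ F ∩ G)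

/-- The complex is connected: any two facets are joined by a chain. -/
def ComplexConnected (Δ : Finset (Finset V)) : Prop :=
  ∀ F ∈ Δ, ∀ G ∈ Δ, ∃ n c, IsChainSeq Δ c n ∧ c 0 = F ∧ c n = G

/-- Every nonempty subcomplex has a leaf. -/
def HasLeafProp (Δ : Finset (Finset V)) : Prop :=
  ∀ Γ ⊆ Δ, Γ.Nonempty → ∃ F, IsLeaf Γ F

/-- A tree: a (nonempty) connected complex all of whose nonempty subcomplexes have a leaf. -/
def IsTree (Δ : Finset (Finset V)) : Prop :=
  Δ.Nonempty ∧ ComplexConnected Δ ∧ HasLeafProp Δ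

/-- A forest: every connected component is a tree; equivalently every nonempty subcomplex
has a leaf. -/
def IsForest (Δ : Finset (Finset V)) : Prop := HasLeafProp Δ

/-- Pure of dimension `d`: all facets have `d + 1` vertices. -/
def IsPure (Δ : Finset (Finset V)) (d : ℕ) : Prop := ∀ F ∈ Δ, F.card = d + 1

/-- Connected in codimension 1: any two facets (ordered by decreasing dimension) are
joined by a proper chain. -/
def ConnCodim1 (Δ : Finset (Finset V)) : Prop :=
  ∀ F ∈ Δ, ∀ G ∈ Δ, G.card ≤ F.card →
    ∃ n c, IsProperChainSeq Δ c n ∧ c 0 = F ∧ c n = G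

/-- The facets of the link of a face `G` of `Δ`. -/
def LinkFacets (Δ : Finset (Finset V)) (G : Finset V) : Finset (Finset V) :=
  (Δ.filter fun F => G ⊆ F).image fun F => F \ G



theorem chain_skip_aux {V : Type} [DecidableEq V] (Δ : Finset (Finset V))
    (c : ℕ → Finset V) (n : ℕ) (hC : IsIrredChainSeq Δ c n)
    {p q : ℕ} (hpq : p + 1 < q) (hq : q ≤ n) : ¬ (c p ∩ c q).Nonempty := by
  intro hne
  obtain ⟨⟨hmem, hcons⟩, hirr⟩ := hC
  set k := q - p - 1 with hk
  have hk1 : 1 ≤ k := by omega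
  set m := n - k with hm
  have hmp : p + 1 ≤ m := by omega
  have hmn : m < n := by omega
  set g : ℕ → ℕ := fun i => if i ≤ p then i else i + k with hg
  have hgsm : StrictMono g := by
    intro a b hab
    simp only [hg]
    split <;> split <;> omega
  refine hirr m hmn g (hgsm.strictMonoOn _) (by simp [hg]) ?_ ⟨?_, ?_⟩
  · simp only [hg]
    rw [if_neg (by omega)]
    omega
  · intro i hi
    simp only [Function.comp, hg]
    split
    · exact hmem _ (by omega)
    · exact hmem _ (by omega)
  · intro i hi
    simp only [Function.comp, hg]
    rcases lt_trichotomy i p with h | h | h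
    · rw [if_pos (by omega), if_pos (by omega)]
      exact hcons i (by omega)
    · subst h
      rw [if_pos le_rfl, if_neg (by omega)]
      have hq' : i + 1 + k = q := by omega
      rw [hq']
      exact hne
    · rw [if_neg (by omega), if_neg (by omega)]
      have h' : i + 1 + k = i + k + 1 := by omega
      rw [h']
      exact hcons (i + k) (by omega)

/-- Lemma 1.7. If `c 0, …, c n` is an irredundant chain in a simplicial
complex, then `c p ∩ c q = ∅` whenever `q ∉ {p-1, p, p+1}`, and `c i` is not a leaf of the
subcomplex `⟨c 0, …, c n⟩` for `i = 1, …, n-1`. -/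
theorem stmt1 {V : Type} [DecidableEq V] (Δ : Finset (Finset V))
    (c : ℕ → Finset V) (n : ℕ) (hC : IsIrredChainSeq Δ c n) :
    (∀ p ≤ n, ∀ q ≤ n, (q + 1 < p ∨ p + 1 < q) → c p ∩ c q = ∅) ∧
    (∀ i, 1 ≤ i → i < n → ¬ IsLeaf ((Finset.range (n + 1)).image c) (c i)) := by
  have key : ∀ p ≤ n, ∀ q ≤ n, (q + 1 < p ∨ p + 1 < q) → c p ∩ c q = ∅ := by
    intro p hp q hq hfar
    rw [← Finset.not_nonempty_iff_eq_empty]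
    rcases hfar with h | h
    · intro hne
      exact chain_skip_aux Δ c n hC h hp (by rwa [Finset.inter_comm])
    · exact chain_skip_aux Δ c n hC h hq
  refine ⟨key, ?_⟩
  intro i h1 hin hleaf
  obtain ⟨hmemΓ, hleaf⟩ := hleaf
  have hne : ∀ j < n, (c j ∩ c (j+1)).Nonempty := hC.1.2
  have hprev : (c (i-1) ∩ c i).Nonempty := by
    have h := hne (i-1) (by omega)
    rwa [show i - 1 + 1 = i by omega] at h
  have hnext : (c i ∩ c (i+1)).Nonempty := hne i (by omega)
  rcases hleaf with heq | ⟨G, hG, hGne, hGmax⟩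
  · have h0 : c 0 ∈ (Finset.range (n+1)).image c :=
      Finset.mem_image_of_mem c (by simp)
    have hn : c n ∈ (Finset.range (n+1)).image c :=
      Finset.mem_image_of_mem c (by simp)
    rw [heq, Finset.mem_singleton] at h0 hn
    have hke := key 0 (by omega) n le_rfl (Or.inr (by omega))
    rw [h0, hn, Finset.inter_self] at hke
    obtain ⟨x, hx⟩ := hnext
    rw [Finset.mem_inter] at hx
    rw [hke] at hx
    exact absurd hx.1 (by simp)
  · obtain ⟨j, hj, hjc⟩ := Finset.mem_image.mp hG
    rw [Finset.mem_range] at hj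
    have hfarpm := key (i-1) (by omega) (i+1) (by omega) (Or.inr (by omega))
    have hprev_ne : c (i-1) ≠ c i := by
      intro h
      rw [h] at hfarpm
      obtain ⟨x, hx⟩ := hnext
      rw [hfarpm] at hx
      exact absurd hx (by simp)
    have hnext_ne : c (i+1) ≠ c i := by
      intro h
      rw [h] at hfarpm
      obtain ⟨x, hx⟩ := hprev
      rw [hfarpm] at hx
      exact absurd hx (by simp)
    have h1' : c i ∩ c (i-1) ⊆ c i ∩ G :=
      hGmax (c (i-1)) (Finset.mem_image_of_mem c (by simp; omega)) hprev_ne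
    have h2' : c i ∩ c (i+1) ⊆ c i ∩ G :=
      hGmax (c (i+1)) (Finset.mem_image_of_mem c (by simp; omega)) hnext_ne
    have hG1 : (c j ∩ c (i-1)).Nonempty := by
      obtain ⟨x, hx⟩ := hprev
      rw [Finset.mem_inter] at hx
      have hx' : x ∈ c i ∩ G := h1' (Finset.mem_inter.mpr ⟨hx.2, hx.1⟩)
      rw [Finset.mem_inter] at hx'
      exact ⟨x, Finset.mem_inter.mpr ⟨hjc ▸ hx'.2, hx.1⟩⟩
    have hG2 : (c j ∩ c (i+1)).Nonempty := by
      obtain ⟨x, hx⟩ := hnext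
      rw [Finset.mem_inter] at hx
      have hx' : x ∈ c i ∩ G := h2' (Finset.mem_inter.mpr ⟨hx.1, hx.2⟩)
      rw [Finset.mem_inter] at hx'
      exact ⟨x, Finset.mem_inter.mpr ⟨hjc ▸ hx'.2, hx.2⟩⟩
    have hji : j = i := by
      by_contra h
      rcases Nat.lt_or_ge j i with h' | h'
      · have hke := key j (by omega) (i+1) (by omega) (Or.inr (by omega))
        simp only [hke] at hG2
        exact absurd hG2 (by simp)
      · have hke := key j (by omega) (i-1) (by omega) (Or.inl (by omega))
        simp only [hke] at hG1
        exact absurd hG1 (by simp)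
    exact hGne (by rw [← hjc, hji])
end

section
/- Let Δ be a pure tree of dimension d. Then Δ is connected in codimension 1 if and only if for every face G of Δ with dim G ≤ d - 2, the link of G in Δ is connected. -/
variable {V : Type} [DecidableEq V]

def s3_skip (a δ : ℕ) : ℕ → ℕ := fun k => if k ≤ a then k else k + δ

lemma s3_skip_strictMono (a δ : ℕ) : StrictMono (s3_skip a δ) := by
  intro x y hxy
  simp only [s3_skip]
  split_ifs <;> omega

lemma s3_inter_card_helper {Δ : Finset (Finset V)} (hΔ : IsComplex Δ)
    {F G S : Finset V} (hF : F ∈ Δ) (hG : G ∈ Δ) (hne : F ≠ G)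
    (hSF : S ⊆ F) (hSG : S ⊆ G) (hSne : S.Nonempty) (hcard : S.card + 1 = G.card) :
    (F ∩ G).Nonempty ∧ (F ∩ G).card + 1 = G.card := by
  have hS : S ⊆ F ∩ G := Finset.subset_inter hSF hSG
  have h1 : S.card ≤ (F ∩ G).card := Finset.card_le_card hS
  have h2 : (F ∩ G).card < G.card := by
    by_contra h
    push_neg at h
    have heq : F ∩ G = G := Finset.eq_of_subset_of_card_le Finset.inter_subset_right h
    have hGF : G ⊆ F := by rw [← heq]; exact Finset.inter_subset_left
    exact hne (hΔ.2 G hG F hF hGF).symm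
  obtain ⟨x, hx⟩ := hSne
  exact ⟨⟨x, hS hx⟩, by omega⟩

lemma s3_skip_proper {Δ : Finset (Finset V)} {c : ℕ → Finset V} {n a δ : ℕ}
    (hc : IsProperChainSeq Δ c n) (hδ : 1 ≤ δ) (ha : a + δ < n)
    (hjne : (c a ∩ c (a + 1 + δ)).Nonempty)
    (hjcard : (c a ∩ c (a + 1 + δ)).card + 1 = (c (a + 1 + δ)).card) :
    IsProperChainSeq Δ (c ∘ s3_skip a δ) (n - δ) := by
  obtain ⟨⟨hmem, hstep⟩, hcard0, hpstep⟩ := hc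
  refine ⟨⟨?_, ?_⟩, ?_, ?_⟩
  · intro i hi
    show c (s3_skip a δ i) ∈ Δ
    simp only [s3_skip]
    split_ifs with h
    · exact hmem i (by omega)
    · exact hmem (i + δ) (by omega)
  · intro k hk
    show (c (s3_skip a δ k) ∩ c (s3_skip a δ (k + 1))).Nonempty
    rcases lt_trichotomy k a with h | h | h
    · rw [show s3_skip a δ k = k from by simp only [s3_skip]; split_ifs <;> omega,
          show s3_skip a δ (k + 1) = k + 1 from by simp only [s3_skip]; split_ifs <;> omega]
      exact hstep k (by omega)
    · rw [show s3_skip a δ k = a from by simp only [s3_skip]; split_ifs <;> omega,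
          show s3_skip a δ (k + 1) = a + 1 + δ from by simp only [s3_skip]; split_ifs <;> omega]
      exact hjne
    · rw [show s3_skip a δ k = k + δ from by simp only [s3_skip]; split_ifs <;> omega,
          show s3_skip a δ (k + 1) = k + 1 + δ from by simp only [s3_skip]; split_ifs <;> omega]
      have h2 := hstep (k + δ) (by omega)
      rwa [show k + δ + 1 = k + 1 + δ from by omega] at h2
  · show (c (s3_skip a δ (n - δ))).card ≤ (c (s3_skip a δ 0)).card
    rw [show s3_skip a δ 0 = 0 from by simp only [s3_skip]; split_ifs <;> omega,
        show s3_skip a δ (n - δ) = n from by simp only [s3_skip]; split_ifs <;> omega]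
    exact hcard0
  · intro k hk
    show (c (s3_skip a δ k) ∩ c (s3_skip a δ (k + 1))).card + 1 = (c (s3_skip a δ (k + 1))).card
    rcases lt_trichotomy k a with h | h | h
    · rw [show s3_skip a δ k = k from by simp only [s3_skip]; split_ifs <;> omega,
          show s3_skip a δ (k + 1) = k + 1 from by simp only [s3_skip]; split_ifs <;> omega]
      exact hpstep k (by omega)
    · rw [show s3_skip a δ k = a from by simp only [s3_skip]; split_ifs <;> omega,
          show s3_skip a δ (k + 1) = a + 1 + δ from by simp only [s3_skip]; split_ifs <;> omega]
      exact hjcard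
    · rw [show s3_skip a δ k = k + δ from by simp only [s3_skip]; split_ifs <;> omega,
          show s3_skip a δ (k + 1) = k + 1 + δ from by simp only [s3_skip]; split_ifs <;> omega]
      have h2 := hpstep (k + δ) (by omega)
      rwa [show k + δ + 1 = k + 1 + δ from by omega] at h2

lemma s3_chain_inj {Δ : Finset (Finset V)} {c : ℕ → Finset V} {n : ℕ}
    (hc : IsIrredProperChainSeq Δ c n) (hne : c 0 ≠ c n) :
    ∀ i ≤ n, ∀ j ≤ n, c i = c j → i = j := by
  obtain ⟨hp, hirr⟩ := hc
  have key : ∀ i j, i < j → j ≤ n → c i ≠ c j := by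
    intro i j hij hjn heq
    by_cases hjn' : j = n
    · rw [hjn'] at heq hij
      have hi1 : 1 ≤ i := by
        rcases Nat.eq_zero_or_pos i with h | h
        · subst h; exact absurd heq hne
        · exact h
      refine hirr (n - (n - i)) (by omega) (s3_skip (i - 1) (n - i))
        ((s3_skip_strictMono _ _).strictMonoOn _)
        (by simp only [s3_skip]; split_ifs <;> omega)
        (by simp only [s3_skip]; split_ifs <;> omega)
        (s3_skip_proper hp (by omega) (by omega) ?_ ?_)
      · rw [show i - 1 + 1 + (n - i) = n from by omega, ← heq]
        have h2 := hp.1.2 (i - 1) (by omega)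
        rwa [show i - 1 + 1 = i from by omega] at h2
      · rw [show i - 1 + 1 + (n - i) = n from by omega, ← heq]
        have h2 := hp.2.2 (i - 1) (by omega)
        rwa [show i - 1 + 1 = i from by omega] at h2
    · refine hirr (n - (j - i)) (by omega) (s3_skip i (j - i))
        ((s3_skip_strictMono _ _).strictMonoOn _)
        (by simp only [s3_skip]; split_ifs <;> omega)
        (by simp only [s3_skip]; split_ifs <;> omega)
        (s3_skip_proper hp (by omega) (by omega) ?_ ?_)
      · rw [show i + 1 + (j - i) = j + 1 from by omega, heq]
        exact hp.1.2 j (by omega)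
      · rw [show i + 1 + (j - i) = j + 1 from by omega, heq]
        exact hp.2.2 j (by omega)
  intro i hi j hj heq
  rcases lt_trichotomy i j with h | h | h
  · exact absurd heq (key i j h hj)
  · exact h
  · exact absurd heq.symm (key j i h hi)

lemma s3_exists_irred {Δ : Finset (Finset V)} :
    ∀ n (c : ℕ → Finset V), IsProperChainSeq Δ c n →
      ∃ m c', IsIrredProperChainSeq Δ c' m ∧ c' 0 = c 0 ∧ c' m = c n := by
  intro n
  induction n using Nat.strong_induction_on with
  | _ n ih =>
    intro c hc
    by_cases h : ∀ m < n, ∀ g : ℕ → ℕ, StrictMonoOn g (Set.Iic m) →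
        g 0 = 0 → g m = n → ¬ IsProperChainSeq Δ (c ∘ g) m
    · exact ⟨n, c, ⟨hc, h⟩, rfl, rfl⟩
    · push_neg at h
      obtain ⟨m, hm, g, hmono, hg0, hgm, hcg⟩ := h
      obtain ⟨m', c', hi, h0, hn⟩ := ih m hm (c ∘ g) hcg
      refine ⟨m', c', hi, ?_, ?_⟩
      · rw [h0, Function.comp_apply, hg0]
      · rw [hn, Function.comp_apply, hgm]

lemma s3_rev_proper {Δ : Finset (Finset V)} {c : ℕ → Finset V} {n d : ℕ}
    (hpure : IsPure Δ d) (hc : IsProperChainSeq Δ c n) :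
    IsProperChainSeq Δ (fun i => c (n - i)) n := by
  obtain ⟨⟨hmem, hstep⟩, hcard0, hpstep⟩ := hc
  refine ⟨⟨fun i _ => hmem (n - i) (by omega), ?_⟩, ?_, ?_⟩
  · intro i hi
    show (c (n - i) ∩ c (n - (i + 1))).Nonempty
    rw [Finset.inter_comm, show n - i = (n - (i + 1)) + 1 from by omega]
    exact hstep (n - (i + 1)) (by omega)
  · show (c (n - n)).card ≤ (c (n - 0)).card
    rw [Nat.sub_self, Nat.sub_zero, hpure _ (hmem 0 (by omega)), hpure _ (hmem n le_rfl)]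
  · intro i hi
    show (c (n - i) ∩ c (n - (i + 1))).card + 1 = (c (n - (i + 1))).card
    rw [Finset.inter_comm, show n - i = (n - (i + 1)) + 1 from by omega]
    have h1 := hpstep (n - (i + 1)) (by omega)
    have h2 := hpure _ (hmem (n - (i + 1)) (by omega))
    have h3 := hpure _ (hmem ((n - (i + 1)) + 1) (by omega))
    omega

lemma s3_rev_irred {Δ : Finset (Finset V)} {c : ℕ → Finset V} {n d : ℕ}
    (hpure : IsPure Δ d) (hc : IsIrredProperChainSeq Δ c n) :
    IsIrredProperChainSeq Δ (fun i => c (n - i)) n := by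
  obtain ⟨hp, hirr⟩ := hc
  have hmemc := hp.1.1
  refine ⟨s3_rev_proper hpure hp, ?_⟩
  intro m hm g hmono hg0 hgm hbad
  have hgle : ∀ k ≤ m, g k ≤ n := by
    intro k hk
    calc g k ≤ g m := by
          rcases eq_or_lt_of_le hk with rfl | h
          · exact le_rfl
          · exact le_of_lt (hmono (Set.mem_Iic.mpr hk) (Set.mem_Iic.mpr le_rfl) h)
      _ = n := hgm
  obtain ⟨⟨hmem, hstep⟩, hc0, hpstep⟩ := hbad
  refine hirr m hm (fun k => n - g (m - k)) ?_ (by simp [hgm]) (by simp [hg0]) ?_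
  · intro x hx y hy hxy
    simp only [Set.mem_Iic] at hx hy
    have h1 : g (m - y) < g (m - x) :=
      hmono (Set.mem_Iic.mpr (by omega)) (Set.mem_Iic.mpr (by omega)) (by omega)
    have h2 : g (m - x) ≤ n := hgle _ (by omega)
    show n - g (m - x) < n - g (m - y)
    omega
  · refine ⟨⟨?_, ?_⟩, ?_, ?_⟩
    · intro i hi
      exact hmem (m - i) (by omega)
    · intro i hi
      show (c (n - g (m - i)) ∩ c (n - g (m - (i + 1)))).Nonempty
      rw [Finset.inter_comm, show m - i = (m - (i + 1)) + 1 from by omega]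
      exact hstep (m - (i + 1)) (by omega)
    · show (c (n - g (m - m))).card ≤ (c (n - g (m - 0))).card
      rw [Nat.sub_self, Nat.sub_zero, hg0, hgm, Nat.sub_zero, Nat.sub_self]
      have h2 := hpure _ (hmemc 0 (by omega))
      have h3 := hpure _ (hmemc n le_rfl)
      omega
    · intro i hi
      show (c (n - g (m - i)) ∩ c (n - g (m - (i + 1)))).card + 1
          = (c (n - g (m - (i + 1)))).card
      rw [Finset.inter_comm, show m - i = (m - (i + 1)) + 1 from by omega]
      have h1 := hpstep (m - (i + 1)) (by omega)
      simp only [Function.comp_apply] at h1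
      have h2 := hpure _ (hmem (m - (i + 1)) (by omega))
      have h3 := hpure _ (hmem ((m - (i + 1)) + 1) (by omega))
      simp only [Function.comp_apply] at h2 h3
      omega

lemma s3_interior_contra {Δ : Finset (Finset V)} {c : ℕ → Finset V} {n s t : ℕ}
    (hΔ : IsComplex Δ) (hc : IsIrredProperChainSeq Δ c n)
    (inj : ∀ i ≤ n, ∀ j ≤ n, c i = c j → i = j)
    (ht1 : 1 ≤ t) (htn : t < n) (hst : s < t)
    (hH : ∀ i ≤ n, c i ≠ c t → c t ∩ c i ⊆ c t ∩ c s) : False := by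
  obtain ⟨hp, hirr⟩ := hc
  have hmem := hp.1.1
  have hstep := hp.1.2
  have hpstep := hp.2.2
  have hne1 : c (t + 1) ≠ c t := by
    intro h
    have := inj (t + 1) (by omega) t (by omega) h
    omega
  have hsub : c t ∩ c (t + 1) ⊆ c s ∩ c (t + 1) := by
    intro x hx
    have hx' := Finset.mem_inter.mp hx
    have h2 := hH (t + 1) (by omega) hne1 hx
    exact Finset.mem_inter.mpr ⟨(Finset.mem_inter.mp h2).2, hx'.2⟩
  have hnej : c s ≠ c (t + 1) := by
    intro h
    have := inj s (by omega) (t + 1) (by omega) h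
    omega
  obtain ⟨hjne, hjcard⟩ := s3_inter_card_helper hΔ (hmem s (by omega)) (hmem (t + 1) (by omega))
    hnej (fun x hx => (Finset.mem_inter.mp (hsub hx)).1) Finset.inter_subset_right
    (hstep t htn) (hpstep t htn)
  exact hirr (n - (t - s)) (by omega) (s3_skip s (t - s))
    ((s3_skip_strictMono _ _).strictMonoOn _)
    (by simp only [s3_skip]; split_ifs <;> omega)
    (by simp only [s3_skip]; split_ifs <;> omega)
    (s3_skip_proper hp (by omega) (by omega)
      (by rw [show s + 1 + (t - s) = t + 1 from by omega]; exact hjne)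
      (by rw [show s + 1 + (t - s) = t + 1 from by omega]; exact hjcard))

lemma s3_endleaf {Δ : Finset (Finset V)} {c : ℕ → Finset V} {n s d : ℕ}
    (hΔ : IsComplex Δ) (hpure : IsPure Δ d) (hc : IsIrredProperChainSeq Δ c n)
    (h2 : 2 ≤ n) (hne : c 0 ≠ c n)
    (inj : ∀ i ≤ n, ∀ j ≤ n, c i = c j → i = j)
    (hs : s ≤ n) (hsne : c s ≠ c n)
    (hH : ∀ i ≤ n, c i ≠ c n → c n ∩ c i ⊆ c n ∩ c s)
    (IH : ∀ c' : ℕ → Finset V, IsIrredProperChainSeq Δ c' (n - 1) → c' 0 ≠ c' (n - 1) →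
      ∀ i ≤ n - 1, c' 0 ∩ c' (n - 1) ⊆ c' i) :
    ∀ i ≤ n, c 0 ∩ c n ⊆ c i := by
  obtain ⟨hp, hirr⟩ := hc
  have hmem := hp.1.1
  have hstep := hp.1.2
  have hpstep := hp.2.2
  have hsn : s ≠ n := fun h => hsne (by rw [h])
  have hnn1 : c (n - 1) ≠ c n := by
    intro h
    have := inj (n - 1) (by omega) n le_rfl h
    omega
  have hstepn : (c (n - 1) ∩ c n).Nonempty := by
    have := hstep (n - 1) (by omega)
    rwa [show n - 1 + 1 = n from by omega] at this
  have hcardn : (c (n - 1) ∩ c n).card + 1 = (c n).card := by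
    have := hpstep (n - 1) (by omega)
    rwa [show n - 1 + 1 = n from by omega] at this
  have hs1 : s = n - 1 := by
    by_contra hs1
    have hslt : s < n - 1 := by omega
    have hsub : c (n - 1) ∩ c n ⊆ c s := by
      intro x hx
      have hx' := Finset.mem_inter.mp hx
      have h2' := hH (n - 1) (by omega) hnn1 (Finset.mem_inter.mpr ⟨hx'.2, hx'.1⟩)
      exact (Finset.mem_inter.mp h2').2
    obtain ⟨hjne, hjcard⟩ := s3_inter_card_helper hΔ (hmem s (by omega)) (hmem n le_rfl)
      hsne hsub Finset.inter_subset_right hstepn hcardn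
    exact hirr (n - (n - s - 1)) (by omega) (s3_skip s (n - s - 1))
      ((s3_skip_strictMono _ _).strictMonoOn _)
      (by simp only [s3_skip]; split_ifs <;> omega)
      (by simp only [s3_skip]; split_ifs <;> omega)
      (s3_skip_proper hp (by omega) (by omega)
        (by rw [show s + 1 + (n - s - 1) = n from by omega]; exact hjne)
        (by rw [show s + 1 + (n - s - 1) = n from by omega]; exact hjcard))
  subst hs1
  have hsub0 : c 0 ∩ c n ⊆ c (n - 1) := by
    intro x hx
    have hx' := Finset.mem_inter.mp hx
    have h2' := hH 0 (by omega) hne (Finset.mem_inter.mpr ⟨hx'.2, hx'.1⟩)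
    exact (Finset.mem_inter.mp h2').2
  have hrest : IsIrredProperChainSeq Δ c (n - 1) := by
    refine ⟨⟨⟨fun i hi => hmem i (by omega), fun i hi => hstep i (by omega)⟩, ?_,
      fun i hi => hpstep i (by omega)⟩, ?_⟩
    · rw [hpure _ (hmem (n - 1) (by omega)), hpure _ (hmem 0 (by omega))]
    · intro m hm g hmono hg0 hgm hbad
      obtain ⟨⟨hmem', hstep'⟩, hc0', hpstep'⟩ := hbad
      refine hirr (m + 1) (by omega) (fun k => if k ≤ m then g k else n) ?_ ?_ ?_ ?_
      · intro x hx y hy hxy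
        simp only [Set.mem_Iic] at hx hy
        by_cases hy' : y ≤ m
        · show (if x ≤ m then g x else n) < (if y ≤ m then g y else n)
          rw [if_pos (by omega : x ≤ m), if_pos hy']
          exact hmono (Set.mem_Iic.mpr (by omega)) (Set.mem_Iic.mpr hy') hxy
        · show (if x ≤ m then g x else n) < (if y ≤ m then g y else n)
          rw [if_neg hy', if_pos (by omega : x ≤ m)]
          have hxm : x ≤ m := by omega
          have : g x ≤ g m := by
            rcases eq_or_lt_of_le hxm with rfl | h
            · exact le_rfl
            · exact le_of_lt (hmono (Set.mem_Iic.mpr hxm) (Set.mem_Iic.mpr le_rfl) h)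
          omega
      · show (if 0 ≤ m then g 0 else n) = 0
        rw [if_pos (by omega)]; exact hg0
      · show (if m + 1 ≤ m then g (m + 1) else n) = n
        rw [if_neg (by omega)]
      · refine ⟨⟨?_, ?_⟩, ?_, ?_⟩
        · intro i hi
          show c (if i ≤ m then g i else n) ∈ Δ
          split_ifs with h
          · exact hmem' i h
          · exact hmem n le_rfl
        · intro i hi
          show (c (if i ≤ m then g i else n) ∩ c (if i + 1 ≤ m then g (i + 1) else n)).Nonempty
          by_cases hi' : i < m
          · rw [if_pos (by omega : i ≤ m), if_pos (by omega : i + 1 ≤ m)]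
            exact hstep' i hi'
          · have hieq : i = m := by omega
            subst hieq
            rw [if_pos le_rfl, if_neg (by omega), hgm]
            exact hstepn
        · show (c (if m + 1 ≤ m then g (m + 1) else n)).card ≤ (c (if 0 ≤ m then g 0 else n)).card
          rw [if_neg (by omega), if_pos (by omega), hg0]
          rw [hpure _ (hmem n le_rfl), hpure _ (hmem 0 (by omega))]
        · intro i hi
          show (c (if i ≤ m then g i else n) ∩ c (if i + 1 ≤ m then g (i + 1) else n)).card + 1
              = (c (if i + 1 ≤ m then g (i + 1) else n)).card
          by_cases hi' : i < m
          · rw [if_pos (by omega : i ≤ m), if_pos (by omega : i + 1 ≤ m)]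
            exact hpstep' i hi'
          · have hieq : i = m := by omega
            subst hieq
            rw [if_pos le_rfl, if_neg (by omega), hgm]
            exact hcardn
  have hne' : c 0 ≠ c (n - 1) := by
    intro h
    have := inj 0 (by omega) (n - 1) (by omega) h
    omega
  have hIH := IH c hrest hne'
  intro i hi
  by_cases hin : i = n
  · subst hin; exact Finset.inter_subset_right
  · intro x hx
    have hx' := Finset.mem_inter.mp hx
    exact hIH i (by omega) (Finset.mem_inter.mpr ⟨hx'.1, hsub0 hx⟩)

lemma s3_tree_lemma {Δ : Finset (Finset V)} {d : ℕ} (hΔ : IsComplex Δ)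
    (hpure : IsPure Δ d) (hforest : HasLeafProp Δ) :
    ∀ n (c : ℕ → Finset V), IsIrredProperChainSeq Δ c n → c 0 ≠ c n →
      ∀ i ≤ n, c 0 ∩ c n ⊆ c i := by
  intro n
  induction n using Nat.strong_induction_on with
  | _ n ihn =>
  intro c hc hne i hi
  by_cases hn2 : 2 ≤ n
  swap
  · have hcase : i = 0 ∨ (n = 1 ∧ i = 1) := by omega
    rcases hcase with rfl | ⟨rfl, rfl⟩
    · exact Finset.inter_subset_left
    · exact Finset.inter_subset_right
  have inj := s3_chain_inj hc hne
  have hmem := hc.1.1.1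
  set Γ := (Finset.range (n + 1)).image c with hΓdef
  have hΓsub : Γ ⊆ Δ := by
    intro F hF
    obtain ⟨j, hj, rfl⟩ := Finset.mem_image.mp hF
    rw [Finset.mem_range] at hj
    exact hmem j (by omega)
  have hΓne : Γ.Nonempty := ⟨c 0, Finset.mem_image.mpr ⟨0, Finset.mem_range.mpr (by omega), rfl⟩⟩
  obtain ⟨F, hFΓ, hleaf⟩ := hforest Γ hΓsub hΓne
  obtain ⟨t, ht, rfl⟩ := Finset.mem_image.mp hFΓ
  rw [Finset.mem_range] at ht
  rcases hleaf with hsing | ⟨G', hG', hG'ne, hH⟩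
  · exfalso
    have h0 : c 0 ∈ Γ := Finset.mem_image.mpr ⟨0, Finset.mem_range.mpr (by omega), rfl⟩
    have hn' : c n ∈ Γ := Finset.mem_image.mpr ⟨n, Finset.mem_range.mpr (by omega), rfl⟩
    rw [hsing, Finset.mem_singleton] at h0 hn'
    exact hne (h0.trans hn'.symm)
  obtain ⟨s, hsr, rfl⟩ := Finset.mem_image.mp hG'
  rw [Finset.mem_range] at hsr
  have hHidx : ∀ j ≤ n, c j ≠ c t → c t ∩ c j ⊆ c t ∩ c s := by
    intro j hj hjne
    exact hH (c j) (Finset.mem_image.mpr ⟨j, Finset.mem_range.mpr (by omega), rfl⟩) hjne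
  have hstne : s ≠ t := by
    intro h
    exact hG'ne (by rw [h])
  by_cases htint : 1 ≤ t ∧ t < n
  · exfalso
    rcases lt_or_gt_of_ne hstne with hlt | hgt
    · exact s3_interior_contra hΔ hc inj htint.1 htint.2 hlt hHidx
    · have hrev := s3_rev_irred hpure hc
      have injrev : ∀ i' ≤ n, ∀ j' ≤ n, c (n - i') = c (n - j') → i' = j' := by
        intro i' hi' j' hj' h
        have := inj (n - i') (by omega) (n - j') (by omega) h
        omega
      refine s3_interior_contra (t := n - t) (s := n - s) hΔ hrev injrev
        (by omega) (by omega) (by omega) ?_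
      intro j hj hjne
      show c (n - (n - t)) ∩ c (n - j) ⊆ c (n - (n - t)) ∩ c (n - (n - s))
      rw [show n - (n - t) = t from by omega, show n - (n - s) = s from by omega]
      refine hHidx (n - j) (by omega) ?_
      intro h
      apply hjne
      show c (n - j) = c (n - (n - t))
      rw [show n - (n - t) = t from by omega]
      exact h
  · have IH : ∀ c' : ℕ → Finset V, IsIrredProperChainSeq Δ c' (n - 1) → c' 0 ≠ c' (n - 1) →
        ∀ j ≤ n - 1, c' 0 ∩ c' (n - 1) ⊆ c' j :=
      fun c' h1 h2 => ihn (n - 1) (by omega) c' h1 h2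
    have htcase : t = 0 ∨ t = n := by omega
    rcases htcase with rfl | rfl
    · -- leaf at index 0 : use the reversed chain
      have hrev := s3_rev_irred hpure hc
      have hnerev : (fun i' => c (n - i')) 0 ≠ (fun i' => c (n - i')) n := by
        show c (n - 0) ≠ c (n - n)
        rw [Nat.sub_zero, Nat.sub_self]
        exact hne.symm
      have injrev : ∀ i' ≤ n, ∀ j' ≤ n,
          (fun k => c (n - k)) i' = (fun k => c (n - k)) j' → i' = j' := by
        intro i' hi' j' hj' h
        have := inj (n - i') (by omega) (n - j') (by omega) h
        omega
      have hsnerev : (fun k => c (n - k)) (n - s) ≠ (fun k => c (n - k)) n := by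
        show c (n - (n - s)) ≠ c (n - n)
        rw [show n - (n - s) = s from by omega, Nat.sub_self]
        exact hG'ne
      have hHrev : ∀ j ≤ n, (fun k => c (n - k)) j ≠ (fun k => c (n - k)) n →
          (fun k => c (n - k)) n ∩ (fun k => c (n - k)) j ⊆
            (fun k => c (n - k)) n ∩ (fun k => c (n - k)) (n - s) := by
        intro j hj hjne
        show c (n - n) ∩ c (n - j) ⊆ c (n - n) ∩ c (n - (n - s))
        rw [Nat.sub_self, show n - (n - s) = s from by omega]
        refine hHidx (n - j) (by omega) ?_
        intro h
        apply hjne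
        show c (n - j) = c (n - n)
        rw [Nat.sub_self]
        exact h
      have key := s3_endleaf hΔ hpure hrev hn2 hnerev injrev (by omega : n - s ≤ n)
        hsnerev hHrev IH (n - i) (by omega)
      have key' : c (n - 0) ∩ c (n - n) ⊆ c (n - (n - i)) := key
      rw [Nat.sub_zero, Nat.sub_self, show n - (n - i) = i from by omega] at key'
      intro x hx
      have hx' := Finset.mem_inter.mp hx
      exact key' (Finset.mem_inter.mpr ⟨hx'.2, hx'.1⟩)
    · exact s3_endleaf hΔ hpure hc hn2 hne inj (by omega) hG'ne hHidx IH i hi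

lemma s3_concat {Δ : Finset (Finset V)} {c1 c2 : ℕ → Finset V} {n1 n2 : ℕ}
    (h1 : IsProperChainSeq Δ c1 n1) (h2 : IsProperChainSeq Δ c2 n2)
    (hmid : c1 n1 = c2 0) :
    ∃ c, IsProperChainSeq Δ c (n1 + n2) ∧ c 0 = c1 0 ∧ c (n1 + n2) = c2 n2 := by
  obtain ⟨⟨hm1, hs1⟩, hc1, hp1⟩ := h1
  obtain ⟨⟨hm2, hs2⟩, hc2, hp2⟩ := h2
  refine ⟨fun i => if i < n1 then c1 i else c2 (i - n1), ⟨⟨?_, ?_⟩, ?_, ?_⟩, ?_, ?_⟩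
  · intro i hi
    show (if i < n1 then c1 i else c2 (i - n1)) ∈ Δ
    split_ifs with h
    · exact hm1 i (by omega)
    · exact hm2 (i - n1) (by omega)
  · intro i hi
    show ((if i < n1 then c1 i else c2 (i - n1)) ∩
      (if i + 1 < n1 then c1 (i + 1) else c2 (i + 1 - n1))).Nonempty
    by_cases h : i + 1 < n1
    · rw [if_pos (by omega : i < n1), if_pos h]
      exact hs1 i (by omega)
    · by_cases h' : i < n1
      · rw [if_pos h', if_neg h, show i + 1 - n1 = 0 from by omega, ← hmid,
          show n1 = i + 1 from by omega]
        exact hs1 i (by omega)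
      · rw [if_neg h', if_neg h, show i + 1 - n1 = (i - n1) + 1 from by omega]
        exact hs2 (i - n1) (by omega)
  · show (if n1 + n2 < n1 then c1 (n1 + n2) else c2 (n1 + n2 - n1)).card ≤
      (if 0 < n1 then c1 0 else c2 (0 - n1)).card
    rw [if_neg (by omega), show n1 + n2 - n1 = n2 from by omega]
    by_cases h : 0 < n1
    · rw [if_pos h]
      calc (c2 n2).card ≤ (c2 0).card := hc2
        _ = (c1 n1).card := by rw [hmid]
        _ ≤ (c1 0).card := hc1
    · rw [if_neg h, show (0 : ℕ) - n1 = 0 from by omega]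
      exact hc2
  · intro i hi
    show ((if i < n1 then c1 i else c2 (i - n1)) ∩
        (if i + 1 < n1 then c1 (i + 1) else c2 (i + 1 - n1))).card + 1 =
      (if i + 1 < n1 then c1 (i + 1) else c2 (i + 1 - n1)).card
    by_cases h : i + 1 < n1
    · rw [if_pos (by omega : i < n1), if_pos h]
      exact hp1 i (by omega)
    · by_cases h' : i < n1
      · rw [if_pos h', if_neg h, show i + 1 - n1 = 0 from by omega, ← hmid,
          show n1 = i + 1 from by omega]
        exact hp1 i (by omega)
      · rw [if_neg h', if_neg h, show i + 1 - n1 = (i - n1) + 1 from by omega]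
        exact hp2 (i - n1) (by omega)
  · show (if 0 < n1 then c1 0 else c2 (0 - n1)) = c1 0
    by_cases h : 0 < n1
    · rw [if_pos h]
    · rw [if_neg h, show (0 : ℕ) - n1 = 0 from by omega, ← hmid, show n1 = 0 from by omega]
  · show (if n1 + n2 < n1 then c1 (n1 + n2) else c2 (n1 + n2 - n1)) = c2 n2
    rw [if_neg (by omega), show n1 + n2 - n1 = n2 from by omega]

lemma s3_trivial_chain {Δ : Finset (Finset V)} {A : Finset V} (hA : A ∈ Δ) :
    IsProperChainSeq Δ (fun _ => A) 0 :=
  ⟨⟨fun _ _ => hA, fun i hi => absurd hi (by omega)⟩, le_rfl, fun i hi => absurd hi (by omega)⟩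

lemma s3_reverse_main {Δ : Finset (Finset V)} {d : ℕ} (hΔ : IsComplex Δ)
    (hpure : IsPure Δ d) (hd : 1 ≤ d)
    (hlink : ∀ G : Finset V, (∃ F ∈ Δ, G ⊆ F) → (G.card : ℤ) ≤ (d : ℤ) - 1 →
      ComplexConnected (LinkFacets Δ G)) :
    ∀ j, ∀ A ∈ Δ, ∀ B ∈ Δ, d ≤ (A ∩ B).card + j →
      ∃ n c, IsProperChainSeq Δ c n ∧ c 0 = A ∧ c n = B := by
  intro j
  induction j with
  | zero =>
    intro A hA B hB hcard
    by_cases hAB : A = B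
    · exact ⟨0, fun _ => A, s3_trivial_chain hA, rfl, hAB⟩
    · have hsub : A ∩ B ⊆ B := Finset.inter_subset_right
      have hneq : A ∩ B ≠ B := by
        intro h
        have hBA : B ⊆ A := by rw [← h]; exact Finset.inter_subset_left
        exact hAB (hΔ.2 B hB A hA hBA).symm
      have hle : (A ∩ B).card ≤ B.card := Finset.card_le_card hsub
      have hlt : (A ∩ B).card ≠ B.card := by
        intro h
        exact hneq (Finset.eq_of_subset_of_card_le hsub (le_of_eq h.symm))
      have hpA := hpure A hA
      have hpB := hpure B hB
      refine ⟨1, fun i => if i = 0 then A else B, ⟨⟨?_, ?_⟩, ?_, ?_⟩, ?_, ?_⟩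
      · intro i hi
        show (if i = 0 then A else B) ∈ Δ
        split_ifs <;> assumption
      · intro i hi
        have hieq : i = 0 := by omega
        subst hieq
        show ((if (0 : ℕ) = 0 then A else B) ∩ (if (0 : ℕ) + 1 = 0 then A else B)).Nonempty
        rw [if_pos rfl, if_neg (by omega)]
        exact Finset.card_pos.mp (by omega)
      · show (if (1 : ℕ) = 0 then A else B).card ≤ (if (0 : ℕ) = 0 then A else B).card
        rw [if_pos rfl, if_neg (by omega)]
        omega
      · intro i hi
        have hieq : i = 0 := by omega
        subst hieq
        show ((if (0 : ℕ) = 0 then A else B) ∩ (if (0 : ℕ) + 1 = 0 then A else B)).card + 1 =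
          (if (0 : ℕ) + 1 = 0 then A else B).card
        rw [if_pos rfl, if_neg (by omega)]
        omega
      · show (if (0 : ℕ) = 0 then A else B) = A
        rw [if_pos rfl]
      · show (if (1 : ℕ) = 0 then A else B) = B
        rw [if_neg (by omega)]
  | succ j ihj =>
    intro A hA B hB hcard
    by_cases h : d ≤ (A ∩ B).card + j
    · exact ihj A hA B hB h
    · push_neg at h
      have hKcard : ((A ∩ B).card : ℤ) ≤ (d : ℤ) - 1 := by
        have : (A ∩ B).card + 1 ≤ d := by omega
        omega
      have hconn := hlink (A ∩ B) ⟨A, hA, Finset.inter_subset_left⟩ hKcard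
      have hAmem : A \ (A ∩ B) ∈ LinkFacets Δ (A ∩ B) :=
        Finset.mem_image.mpr ⟨A, Finset.mem_filter.mpr ⟨hA, Finset.inter_subset_left⟩, rfl⟩
      have hBmem : B \ (A ∩ B) ∈ LinkFacets Δ (A ∩ B) :=
        Finset.mem_image.mpr ⟨B, Finset.mem_filter.mpr ⟨hB, Finset.inter_subset_right⟩, rfl⟩
      obtain ⟨m, c', ⟨hmem', hstep'⟩, h0', hm'⟩ := hconn _ hAmem _ hBmem
      have hF : ∀ i ≤ m, c' i ∪ (A ∩ B) ∈ Δ ∧ (c' i ∪ (A ∩ B)) \ (A ∩ B) = c' i := by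
        intro i hi
        obtain ⟨P, hP, hPe⟩ := Finset.mem_image.mp (hmem' i hi)
        obtain ⟨hPΔ, hKP⟩ := Finset.mem_filter.mp hP
        have hPeq : c' i ∪ (A ∩ B) = P := by
          rw [← hPe]
          exact Finset.sdiff_union_of_subset hKP
        rw [hPeq]
        exact ⟨hPΔ, hPe⟩
      have hpair : ∀ i < m, ∃ nn cc, IsProperChainSeq Δ cc nn ∧
          cc 0 = c' i ∪ (A ∩ B) ∧ cc nn = c' (i + 1) ∪ (A ∩ B) := by
        intro i hi
        apply ihj _ (hF i (by omega)).1 _ (hF (i + 1) (by omega)).1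
        obtain ⟨v, hv⟩ := hstep' i hi
        have hv' := Finset.mem_inter.mp hv
        have hvK : v ∉ A ∩ B := by
          have h3 := (hF i (by omega)).2
          have h4 : v ∈ (c' i ∪ (A ∩ B)) \ (A ∩ B) := by rw [h3]; exact hv'.1
          exact (Finset.mem_sdiff.mp h4).2
        have hsubins : insert v (A ∩ B) ⊆ (c' i ∪ (A ∩ B)) ∩ (c' (i + 1) ∪ (A ∩ B)) := by
          intro x hx
          rcases Finset.mem_insert.mp hx with rfl | hxK
          · exact Finset.mem_inter.mpr
              ⟨Finset.mem_union_left _ hv'.1, Finset.mem_union_left _ hv'.2⟩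
          · exact Finset.mem_inter.mpr
              ⟨Finset.mem_union_right _ hxK, Finset.mem_union_right _ hxK⟩
        have hcins : (insert v (A ∩ B)).card = (A ∩ B).card + 1 :=
          Finset.card_insert_of_notMem hvK
        have hcle := Finset.card_le_card hsubins
        omega
      have hbuild : ∀ i ≤ m, ∃ nn cc, IsProperChainSeq Δ cc nn ∧
          cc 0 = c' 0 ∪ (A ∩ B) ∧ cc nn = c' i ∪ (A ∩ B) := by
        intro i
        induction i with
        | zero =>
          exact fun _ => ⟨0, fun _ => c' 0 ∪ (A ∩ B),
            s3_trivial_chain (hF 0 (by omega)).1, rfl, rfl⟩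
        | succ i ihi =>
          intro hi
          obtain ⟨nn, cc, hcc, hcc0, hccn⟩ := ihi (by omega)
          obtain ⟨nn2, cc2, hcc2, h20, h2n⟩ := hpair i (by omega)
          obtain ⟨c3, h3, h30, h3n⟩ := s3_concat hcc hcc2 (by rw [hccn, h20])
          exact ⟨nn + nn2, c3, h3, by rw [h30, hcc0], by rw [h3n, h2n]⟩
      obtain ⟨nn, cc, hcc, hcc0, hccn⟩ := hbuild m le_rfl
      refine ⟨nn, cc, hcc, ?_, ?_⟩
      · rw [hcc0, h0', Finset.sdiff_union_of_subset Finset.inter_subset_left]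
      · rw [hccn, hm', Finset.sdiff_union_of_subset Finset.inter_subset_right]

/-- Proposition 1.12. A pure tree `Δ` of dimension `d` is connected in
codimension 1 iff for every face `G` of `Δ` with `dim G ≤ d - 2` (i.e. `|G| ≤ d - 1`) the
link of `G` in `Δ` is connected. -/
theorem stmt3 {V : Type} [DecidableEq V] (Δ : Finset (Finset V)) (hΔ : IsComplex Δ)
    (d : ℕ) (hpure : IsPure Δ d) (htree : IsTree Δ) :
    ConnCodim1 Δ ↔ ∀ G : Finset V, (∃ F ∈ Δ, G ⊆ F) → (G.card : ℤ) ≤ (d : ℤ) - 1 →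
      ComplexConnected (LinkFacets Δ G) := by
  constructor
  · intro hcc G hGface hGd
    obtain ⟨F0, hF0, hGF0⟩ := hGface
    have hGd' : G.card + 1 ≤ d := by
      have h1 : (G.card : ℤ) + 1 ≤ (d : ℤ) := by omega
      exact_mod_cast h1
    intro A' hA' B' hB'
    obtain ⟨A, hAf, rfl⟩ := Finset.mem_image.mp hA'
    obtain ⟨B, hBf, rfl⟩ := Finset.mem_image.mp hB'
    obtain ⟨hA, hGA⟩ := Finset.mem_filter.mp hAf
    obtain ⟨hB, hGB⟩ := Finset.mem_filter.mp hBf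
    by_cases hAB : A = B
    · subst hAB
      exact ⟨0, fun _ => A \ G,
        ⟨fun i _ => hA', fun i hi => absurd hi (by omega)⟩, rfl, rfl⟩
    · obtain ⟨n0, c0, hc0, h00, h0n⟩ := hcc A hA B hB (by rw [hpure A hA, hpure B hB])
      obtain ⟨n, c, hirr, hc0', hcn'⟩ := s3_exists_irred n0 c0 hc0
      rw [h00] at hc0'
      rw [h0n] at hcn'
      have hne : c 0 ≠ c n := by rw [hc0', hcn']; exact hAB
      have htl := s3_tree_lemma hΔ hpure htree.2.2 n c hirr hne
      have hGsub : ∀ i ≤ n, G ⊆ c i := by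
        intro i hi x hx
        refine htl i hi (Finset.mem_inter.mpr ⟨?_, ?_⟩)
        · rw [hc0']; exact hGA hx
        · rw [hcn']; exact hGB hx
      refine ⟨n, fun i => c i \ G, ⟨?_, ?_⟩, ?_, ?_⟩
      · intro i hi
        exact Finset.mem_image.mpr
          ⟨c i, Finset.mem_filter.mpr ⟨hirr.1.1.1 i hi, hGsub i hi⟩, rfl⟩
      · intro i hi
        have hint : (c i ∩ c (i + 1)).card + 1 = (c (i + 1)).card := hirr.1.2.2 i hi
        have hcardint : (c i ∩ c (i + 1)).card = d := by
          rw [hpure _ (hirr.1.1.1 (i + 1) (by omega))] at hint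
          omega
        have hsub : (c i ∩ c (i + 1)) \ G ⊆ (c i \ G) ∩ (c (i + 1) \ G) := by
          intro x hx
          obtain ⟨hx1, hx2⟩ := Finset.mem_sdiff.mp hx
          obtain ⟨hxa, hxb⟩ := Finset.mem_inter.mp hx1
          exact Finset.mem_inter.mpr
            ⟨Finset.mem_sdiff.mpr ⟨hxa, hx2⟩, Finset.mem_sdiff.mpr ⟨hxb, hx2⟩⟩
        have hge := Finset.le_card_sdiff G (c i ∩ c (i + 1))
        have hpos : 0 < ((c i ∩ c (i + 1)) \ G).card := by omega
        obtain ⟨x, hx⟩ := Finset.card_pos.mp hpos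
        exact ⟨x, hsub hx⟩
      · show c 0 \ G = A \ G
        rw [hc0']
      · show c n \ G = B \ G
        rw [hcn']
  · intro hlink F hF G hG hcard
    by_cases hd : d = 0
    · subst hd
      obtain ⟨n, c, ⟨hmem, hstep⟩, h0, hn⟩ := htree.2.1 F hF G hG
      have hall : ∀ i ≤ n, c i = F := by
        intro i
        induction i with
        | zero => exact fun _ => h0
        | succ i ihi =>
          intro hi
          obtain ⟨v, hv⟩ := hstep i (by omega)
          obtain ⟨hv1, hv2⟩ := Finset.mem_inter.mp hv
          obtain ⟨a, ha⟩ := Finset.card_eq_one.mp (hpure _ (hmem i (by omega)))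
          obtain ⟨b, hb⟩ := Finset.card_eq_one.mp (hpure _ (hmem (i + 1) hi))
          rw [ha] at hv1
          rw [hb] at hv2
          rw [Finset.mem_singleton] at hv1 hv2
          rw [← ihi (by omega), ha, hb, ← hv1, ← hv2]
      have hFG : F = G := by rw [← hn, hall n le_rfl]
      exact ⟨0, fun _ => F, s3_trivial_chain hF, rfl, hFG⟩
    · exact s3_reverse_main hΔ hpure (by omega) hlink d F hF G hG (by omega)
end

section
/- Let Δ be a pure tree of dimension d that is connected in codimension 1. Then for every facet F of Δ, all the facets of the intersection complex ⟨F⟩ ∩ ⟨F(Δ) \ {F}⟩ have dimension d - 1. -/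
variable {V : Type} [DecidableEq V]

section AuxStmt4

variable {V : Type} [DecidableEq V]

lemma stmt4_inter_card_le {Δ : Finset (Finset V)} (hΔ : IsComplex Δ) {d : ℕ}
    (hpure : IsPure Δ d) {A B : Finset V} (hA : A ∈ Δ) (hB : B ∈ Δ) (hne : A ≠ B) :
    (A ∩ B).card ≤ d := by
  by_contra h
  push_neg at h
  have hAcard := hpure A hA
  have h1 : (A ∩ B).card ≤ A.card := Finset.card_le_card Finset.inter_subset_left
  have h2 : A.card ≤ (A ∩ B).card := by omega
  have h3 : A ∩ B = A := Finset.eq_of_subset_of_card_le Finset.inter_subset_left h2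
  have h4 : A ⊆ B := by rw [← h3]; exact Finset.inter_subset_right
  exact hne (hΔ.2 A hA B hB h4)

lemma stmt4_shortcut {Δ : Finset (Finset V)} {d : ℕ} (hpure : IsPure Δ d)
    {c : ℕ → Finset V} {n : ℕ} (hc : IsProperChainSeq Δ c n)
    {a b : ℕ} (hab : a + 1 < b) (hbn : b ≤ n)
    (hd : (c a ∩ c b).card + 1 = (c b).card) :
    ∃ m < n, ∃ c', IsProperChainSeq Δ c' m ∧ c' 0 = c 0 ∧ c' m = c n := by
  obtain ⟨⟨hmem, hchain⟩, hend, hproper⟩ := hc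
  -- d ≥ 1
  have hd1 : 1 ≤ d := by
    have h0 := hchain 0 (by omega)
    have h1 := hproper 0 (by omega)
    have h2 := hpure (c (0+1)) (hmem (0+1) (by omega))
    have h3 := Finset.card_pos.mpr h0
    omega
  set m := a + (n - b) + 1 with hm
  refine ⟨m, by omega, fun t => if t ≤ a then c t else c (t + (b - a - 1)), ?_, ?_, ?_⟩
  · have hmemi : ∀ t ≤ m, (if t ≤ a then c t else c (t + (b - a - 1))) ∈ Δ := by
      intro t ht
      by_cases h : t ≤ a
      · simp only [h, if_pos]; exact hmem t (by omega)
      · simp only [h, if_neg, if_false]; exact hmem _ (by omega)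
    have hstep : ∀ t < m,
        ((if t ≤ a then c t else c (t + (b - a - 1))) ∩
          (if t + 1 ≤ a then c (t+1) else c (t + 1 + (b - a - 1)))).card + 1 =
        (if t + 1 ≤ a then c (t+1) else c (t + 1 + (b - a - 1))).card := by
      intro t ht
      rcases lt_trichotomy t a with h | h | h
      · simp only [if_pos (le_of_lt h), if_pos (Nat.succ_le_of_lt h)]
        exact hproper t (by omega)
      · subst h
        simp only [le_refl, if_pos, if_neg (by omega : ¬ t + 1 ≤ t)]
        have : t + 1 + (b - t - 1) = b := by omega
        rw [this]; exact hd
      · simp only [if_neg (by omega : ¬ t ≤ a), if_neg (by omega : ¬ t + 1 ≤ a)]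
        have : t + 1 + (b - a - 1) = t + (b - a - 1) + 1 := by omega
        rw [this]
        exact hproper (t + (b - a - 1)) (by omega)
    refine ⟨⟨hmemi, ?_⟩, ?_, hstep⟩
    · intro t ht
      have h1 := hstep t ht
      have hmem2 := hmemi (t + 1) (by omega)
      have h2 := hpure _ hmem2
      show ((if t ≤ a then c t else c (t + (b - a - 1))) ∩
        (if t + 1 ≤ a then c (t+1) else c (t + 1 + (b - a - 1)))).Nonempty
      apply Finset.card_pos.mp
      omega
    · have e0 := hpure _ (hmemi 0 (by omega))
      have em := hpure _ (hmemi m (by omega))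
      show (if m ≤ a then c m else c (m + (b - a - 1))).card ≤
        (if (0:ℕ) ≤ a then c 0 else c (0 + (b - a - 1))).card
      omega
  · simp only [if_pos (by omega : (0:ℕ) ≤ a)]
  · simp only [if_neg (by omega : ¬ m ≤ a)]
    congr 1
    omega

lemma stmt4_extend {Δ : Finset (Finset V)} {d : ℕ} (hpure : IsPure Δ d) (hd1 : 1 ≤ d)
    {c : ℕ → Finset V} {m : ℕ} (hc : IsProperChainSeq Δ c m)
    {Y : Finset V} (hY : Y ∈ Δ) (h : (c m ∩ Y).card + 1 = Y.card) :
    ∃ c', IsProperChainSeq Δ c' (m + 1) ∧ c' 0 = c 0 ∧ c' (m + 1) = Y := by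
  obtain ⟨⟨hmem, hchain⟩, hend, hproper⟩ := hc
  refine ⟨fun t => if t ≤ m then c t else Y, ⟨⟨?_, ?_⟩, ?_, ?_⟩, ?_, ?_⟩
  · intro t ht
    by_cases hh : t ≤ m
    · simp only [hh, if_pos]; exact hmem t hh
    · simp only [hh, if_neg, if_false]; exact hY
  · intro t ht
    rcases lt_or_eq_of_le (Nat.lt_succ_iff.mp ht) with h' | h'
    · simp only [if_pos (le_of_lt h'), if_pos (Nat.succ_le_of_lt h')]
      exact hchain t h'
    · subst h'
      simp only [le_refl, if_pos, if_neg (by omega : ¬ t + 1 ≤ t)]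
      have hYc := hpure Y hY
      apply Finset.card_pos.mp
      omega
  · simp only [if_pos (by omega : (0:ℕ) ≤ m), if_neg (by omega : ¬ m + 1 ≤ m)]
    have := hpure Y hY
    have := hpure _ (hmem 0 (by omega))
    omega
  · intro t ht
    rcases lt_or_eq_of_le (Nat.lt_succ_iff.mp ht) with h' | h'
    · simp only [if_pos (le_of_lt h'), if_pos (Nat.succ_le_of_lt h')]
      exact hproper t h'
    · subst h'
      simp only [le_refl, if_pos, if_neg (by omega : ¬ t + 1 ≤ t)]
      exact h
  · simp only [if_pos (by omega : (0:ℕ) ≤ m)]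
  · simp only [if_neg (by omega : ¬ m + 1 ≤ m)]

lemma stmt4_key {Δ : Finset (Finset V)} (hΔ : IsComplex Δ) {d : ℕ} (hpure : IsPure Δ d)
    (hleaf : HasLeafProp Δ) :
    ∀ n c, IsProperChainSeq Δ c n → c 0 ≠ c n →
      (∀ m < n, ¬ ∃ c', IsProperChainSeq Δ c' m ∧ c' 0 = c 0 ∧ c' m = c n) →
      c 0 ∩ c n ⊆ c 0 ∩ c 1 := by
  intro n
  induction n using Nat.strong_induction_on with
  | _ n IH =>
  intro c hc hne hmin
  rcases Nat.lt_or_ge n 2 with hn2 | hn2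
  · interval_cases n
    · exact absurd rfl hne
    · exact Finset.Subset.refl _
  -- n ≥ 2
  have hmem := hc.1.1
  have hchain := hc.1.2
  have hproper := hc.2.2
  have hd1 : 1 ≤ d := by
    have h0 := hchain 0 (by omega)
    have h1 := hproper 0 (by omega)
    have h2 := hpure (c (0+1)) (hmem (0+1) (by omega))
    have h3 := Finset.card_pos.mpr h0
    omega
  have hproper' : ∀ i, i < n → (c i ∩ c (i+1)).card = d := by
    intro i hi
    have h1 := hproper i hi
    have h2 := hpure (c (i+1)) (hmem (i+1) (by omega))
    omega
  -- distinctness of chain members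
  have hinj : ∀ i j, i < j → j ≤ n → c i ≠ c j := by
    intro i j hij hjn heq
    rcases Nat.lt_or_ge j n with hj | hj
    · have hd' : (c i ∩ c (j+1)).card + 1 = (c (j+1)).card := by
        rw [heq]; exact hproper j hj
      obtain ⟨m, hm, c', hc', h0, hmn⟩ := stmt4_shortcut hpure hc (by omega) (by omega) hd'
      exact hmin m hm ⟨c', hc', h0, hmn⟩
    · have hj' : j = n := by omega
      rw [hj'] at heq
      rcases Nat.eq_zero_or_pos i with rfl | hi
      · exact hne heq
      · obtain ⟨i', rfl⟩ : ∃ i', i = i' + 1 := ⟨i - 1, by omega⟩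
        have hd' : (c i' ∩ c n).card + 1 = (c n).card := by
          rw [← heq]; exact hproper i' (by omega)
        obtain ⟨m, hm, c', hc', h0, hmn⟩ := stmt4_shortcut hpure hc (by omega) (le_refl n) hd'
        exact hmin m hm ⟨c', hc', h0, hmn⟩
  -- the subcomplex on the chain members has a leaf
  have hmemΓ : ∀ i ≤ n, c i ∈ (Finset.range (n+1)).image c := by
    intro i hi
    exact Finset.mem_image.mpr ⟨i, Finset.mem_range.mpr (by omega), rfl⟩
  have hΓΔ : (Finset.range (n+1)).image c ⊆ Δ := by
    intro x hx
    obtain ⟨i, hi, rfl⟩ := Finset.mem_image.mp hx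
    have := Finset.mem_range.mp hi
    exact hmem i (by omega)
  obtain ⟨L, hLmem, hLcase⟩ := hleaf _ hΓΔ ⟨c 0, hmemΓ 0 (by omega)⟩
  obtain ⟨j, hjr, rfl⟩ := Finset.mem_image.mp hLmem
  have hjn : j ≤ n := by have := Finset.mem_range.mp hjr; omega
  rcases hLcase with hsingle | ⟨G, hGmem, hGne, hjoint⟩
  · have h0 : c 0 = c j := by
      have h := hmemΓ 0 (by omega); rw [hsingle] at h; exact Finset.mem_singleton.mp h
    have h1 : c n = c j := by
      have h := hmemΓ n (le_refl n); rw [hsingle] at h; exact Finset.mem_singleton.mp h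
    exact absurd (h0.trans h1.symm) hne
  obtain ⟨k, hkr, rfl⟩ := Finset.mem_image.mp hGmem
  have hkn : k ≤ n := by have := Finset.mem_range.mp hkr; omega
  rcases eq_or_ne j 0 with rfl | hj0
  · -- leaf is c 0
    have hk0 : k ≠ 0 := by rintro rfl; exact hGne rfl
    have h01sub : c 0 ∩ c 1 ⊆ c 0 ∩ c k :=
      hjoint (c 1) (hmemΓ 1 (by omega)) (Ne.symm (hinj 0 1 (by omega) (by omega)))
    have h01card : (c 0 ∩ c 1).card = d := by
      have h := hproper' 0 (by omega); simpa using h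
    have hcardk : (c 0 ∩ c k).card = d := by
      have hle := stmt4_inter_card_le hΔ hpure (hmem 0 (by omega)) (hmem k hkn) (Ne.symm hGne)
      have hge : d ≤ (c 0 ∩ c k).card := h01card ▸ Finset.card_le_card h01sub
      omega
    rcases eq_or_ne k 1 with rfl | hk1
    · exact hjoint (c n) (hmemΓ n (le_refl n)) (Ne.symm hne)
    · have hd' : (c 0 ∩ c k).card + 1 = (c k).card := by
        have := hpure (c k) (hmem k hkn); omega
      obtain ⟨m, hm, c', hc', h0, hmn⟩ := stmt4_shortcut hpure hc (by omega) hkn hd'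
      exact absurd ⟨c', hc', h0, hmn⟩ (hmin m hm)
  rcases eq_or_ne j n with rfl | hjn2
  · -- leaf is c n
    obtain ⟨n', rfl⟩ : ∃ n', j = n' + 1 := ⟨j - 1, by omega⟩
    have hkne : k ≠ n' + 1 := by rintro rfl; exact hGne rfl
    have hsub1 : c (n'+1) ∩ c n' ⊆ c (n'+1) ∩ c k :=
      hjoint (c n') (hmemΓ n' (by omega)) (hinj n' (n'+1) (by omega) (le_refl _))
    have hpn : (c n' ∩ c (n'+1)).card = d := hproper' n' (by omega)
    have hcardk : (c (n'+1) ∩ c k).card = d := by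
      have hle := stmt4_inter_card_le hΔ hpure (hmem (n'+1) (le_refl _)) (hmem k hkn) (Ne.symm hGne)
      have h2 : (c (n'+1) ∩ c n').card = d := by rw [Finset.inter_comm]; exact hpn
      have hge : d ≤ (c (n'+1) ∩ c k).card := h2 ▸ Finset.card_le_card hsub1
      omega
    rcases eq_or_ne n' k with rfl | hkn'
    · -- joint is the previous facet: recurse
      have hsub0 : c 0 ∩ c (n'+1) ⊆ c 0 ∩ c n' := by
        intro x hx
        obtain ⟨hx0, hxn⟩ := Finset.mem_inter.mp hx
        have h := hjoint (c 0) (hmemΓ 0 (by omega)) hne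
          (Finset.mem_inter.mpr ⟨hxn, hx0⟩)
        exact Finset.mem_inter.mpr ⟨hx0, (Finset.mem_inter.mp h).2⟩
      have hc' : IsProperChainSeq Δ c n' := by
        refine ⟨⟨fun i hi => hmem i (by omega), fun i hi => hchain i (by omega)⟩, ?_,
          fun i hi => hproper i (by omega)⟩
        have h1 := hpure (c 0) (hmem 0 (by omega))
        have h2 := hpure (c n') (hmem n' (by omega))
        omega
      have hne' : c 0 ≠ c n' := hinj 0 n' (by omega) (by omega)
      have hmin' : ∀ m < n', ¬ ∃ c'', IsProperChainSeq Δ c'' m ∧ c'' 0 = c 0 ∧ c'' m = c n' := by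
        rintro m hm ⟨c'', hcc'', h0, hmn⟩
        have hext : (c'' m ∩ c (n'+1)).card + 1 = (c (n'+1)).card := by
          rw [hmn]; exact hproper n' (by omega)
        obtain ⟨c3, hc3, h30, h3m⟩ :=
          stmt4_extend hpure hd1 hcc'' (hmem (n'+1) (le_refl _)) hext
        exact hmin (m+1) (by omega) ⟨c3, hc3, by rw [h30, h0], h3m⟩
      have hIH := IH n' (by omega) c hc' hne' hmin'
      exact fun x hx => hIH (hsub0 hx)
    · -- joint is further back: shortcut (k, n)
      have hklt : k < n' := by omega
      have hd' : (c k ∩ c (n'+1)).card + 1 = (c (n'+1)).card := by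
        have h1 : (c k ∩ c (n'+1)).card = d := by rw [Finset.inter_comm]; exact hcardk
        have := hpure (c (n'+1)) (hmem (n'+1) (le_refl _)); omega
      obtain ⟨m, hm, c', hcc, h0, hmn⟩ :=
        stmt4_shortcut hpure hc (by omega) (le_refl _) hd'
      exact absurd ⟨c', hcc, h0, hmn⟩ (hmin m hm)
  · -- leaf is interior
    obtain ⟨j', rfl⟩ : ∃ j', j = j' + 1 := ⟨j - 1, by omega⟩
    have hjlt : j' + 1 < n := by omega
    have hkj : k ≠ j' + 1 := by rintro rfl; exact hGne rfl
    have hA : (c j' ∩ c (j'+1)).card = d := hproper' j' (by omega)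
    have hB : (c (j'+1) ∩ c (j'+2)).card = d := hproper' (j'+1) (by omega)
    have hsubA : c (j'+1) ∩ c j' ⊆ c (j'+1) ∩ c k :=
      hjoint (c j') (hmemΓ j' (by omega)) (hinj j' (j'+1) (by omega) (by omega))
    have hsubB : c (j'+1) ∩ c (j'+2) ⊆ c (j'+1) ∩ c k :=
      hjoint (c (j'+2)) (hmemΓ (j'+2) (by omega)) (Ne.symm (hinj (j'+1) (j'+2) (by omega) (by omega)))
    have hcardk : (c (j'+1) ∩ c k).card = d := by
      have hle := stmt4_inter_card_le hΔ hpure (hmem (j'+1) (by omega)) (hmem k hkn) (Ne.symm hGne)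
      have h2 : (c (j'+1) ∩ c j').card = d := by rw [Finset.inter_comm]; exact hA
      have hge : d ≤ (c (j'+1) ∩ c k).card := h2 ▸ Finset.card_le_card hsubA
      omega
    have heqA : c (j'+1) ∩ c j' = c (j'+1) ∩ c k :=
      Finset.eq_of_subset_of_card_le hsubA (by
        rw [hcardk, Finset.inter_comm]; omega)
    have heqB : c (j'+1) ∩ c (j'+2) = c (j'+1) ∩ c k :=
      Finset.eq_of_subset_of_card_le hsubB (by rw [hcardk, hB])
    rcases Nat.lt_or_ge (j'+1) k with hkgt | hkle
    · -- k > j'+1 : shortcut (j', k)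
      have hsub : c j' ∩ c (j'+1) ⊆ c j' ∩ c k := by
        intro x hx
        obtain ⟨hx1, hx2⟩ := Finset.mem_inter.mp hx
        have h := heqA ▸ (Finset.mem_inter.mpr ⟨hx2, hx1⟩)
        exact Finset.mem_inter.mpr ⟨hx1, (Finset.mem_inter.mp h).2⟩
      have hcard : (c j' ∩ c k).card = d := by
        have hge : d ≤ (c j' ∩ c k).card := hA ▸ Finset.card_le_card hsub
        have hle := stmt4_inter_card_le hΔ hpure (hmem j' (by omega)) (hmem k hkn)
          (hinj j' k (by omega) hkn)
        omega
      have hd' : (c j' ∩ c k).card + 1 = (c k).card := by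
        have := hpure (c k) (hmem k hkn); omega
      obtain ⟨m, hm, c', hcc, h0, hmn⟩ := stmt4_shortcut hpure hc hkgt hkn hd'
      exact absurd ⟨c', hcc, h0, hmn⟩ (hmin m hm)
    · -- k ≤ j' : shortcut (k, j'+2)
      have hkle' : k ≤ j' := by omega
      have hsub : c (j'+1) ∩ c (j'+2) ⊆ c k ∩ c (j'+2) := by
        intro x hx
        obtain ⟨hx1, hx2⟩ := Finset.mem_inter.mp hx
        have h := heqB ▸ hx
        exact Finset.mem_inter.mpr ⟨(Finset.mem_inter.mp h).2, hx2⟩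
      have hcard : (c k ∩ c (j'+2)).card = d := by
        have hge : d ≤ (c k ∩ c (j'+2)).card := hB ▸ Finset.card_le_card hsub
        have hle := stmt4_inter_card_le hΔ hpure (hmem k hkn) (hmem (j'+2) (by omega))
          (hinj k (j'+2) (by omega) (by omega))
        omega
      have hd' : (c k ∩ c (j'+2)).card + 1 = (c (j'+2)).card := by
        have := hpure (c (j'+2)) (hmem (j'+2) (by omega)); omega
      obtain ⟨m, hm, c', hcc, h0, hmn⟩ :=
        stmt4_shortcut hpure hc (by omega) (by omega) hd'
      exact absurd ⟨c', hcc, h0, hmn⟩ (hmin m hm)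

end AuxStmt4


/-- Corollary 1.13. If `Δ` is a pure tree of dimension `d` which is
connected in codimension 1, then for every facet `F` all the facets of
`⟨F⟩ ∩ ⟨F(Δ) \ {F}⟩` (i.e. the maximal sets among the `F ∩ H`, `H` a facet, `H ≠ F`) have
dimension `d - 1`, i.e. cardinality `d`. -/
theorem stmt4 {V : Type} [DecidableEq V] (Δ : Finset (Finset V)) (hΔ : IsComplex Δ)
    (d : ℕ) (hpure : IsPure Δ d) (htree : IsTree Δ) (hcc : ConnCodim1 Δ)
    (F : Finset V) (hF : F ∈ Δ) (E : Finset V)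
    (hE : E ∈ (Δ.erase F).image fun H => F ∩ H)
    (hmax : ∀ E₂ ∈ (Δ.erase F).image (fun H => F ∩ H), E ⊆ E₂ → E = E₂) :
    E.card = d := by
  classical
  obtain ⟨H₀, hH₀, hEeq⟩ := Finset.mem_image.mp hE
  have hH₀ne : H₀ ≠ F := Finset.ne_of_mem_erase hH₀
  have hH₀Δ : H₀ ∈ Δ := Finset.mem_of_mem_erase hH₀
  subst hEeq
  obtain ⟨n₀, c₀, hc₀, h00, h0n⟩ := hcc F hF H₀ hH₀Δ (by rw [hpure F hF, hpure H₀ hH₀Δ])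
  have hPn : ∃ n, ∃ c, IsProperChainSeq Δ c n ∧ c 0 = F ∧ c n = H₀ := ⟨n₀, c₀, hc₀, h00, h0n⟩
  obtain ⟨c, hc, hc0, hcn⟩ := Nat.find_spec hPn
  set n := Nat.find hPn with hn
  have hminP : ∀ m < n, ¬ ∃ c, IsProperChainSeq Δ c m ∧ c 0 = F ∧ c m = H₀ :=
    fun m hm => Nat.find_min hPn hm
  have hn1 : 1 ≤ n := by
    rcases Nat.eq_zero_or_pos n with h0 | h1
    · exfalso
      apply hH₀ne
      calc H₀ = c n := hcn.symm
        _ = c 0 := by rw [h0]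
        _ = F := hc0
    · exact h1
  have hmin' : ∀ m < n, ¬ ∃ c', IsProperChainSeq Δ c' m ∧ c' 0 = c 0 ∧ c' m = c n := by
    rintro m hm ⟨c', h1, h2, h3⟩
    exact hminP m hm ⟨c', h1, by rw [h2, hc0], by rw [h3, hcn]⟩
  have hkey := stmt4_key hΔ hpure htree.2.2 n c hc
    (by rw [hc0, hcn]; exact fun h => hH₀ne h.symm) hmin'
  rw [hc0, hcn] at hkey
  have hc1 : c 1 ∈ Δ := hc.1.1 1 hn1
  have hc1card : (c 0 ∩ c 1).card = d := by
    have h1 := hc.2.2 0 (by omega)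
    have h2 := hpure (c (0+1)) (hc.1.1 (0+1) (by omega))
    have h3 : (c 0 ∩ c (0+1)).card = d := by omega
    simpa using h3
  rw [hc0] at hc1card
  have hc1ne : c 1 ≠ F := by
    intro h
    rw [h, Finset.inter_self] at hc1card
    have := hpure F hF
    omega
  have hc1mem : F ∩ c 1 ∈ (Δ.erase F).image (fun H => F ∩ H) :=
    Finset.mem_image.mpr ⟨c 1, Finset.mem_erase.mpr ⟨hc1ne, hc1⟩, rfl⟩
  have hEeq2 := hmax (F ∩ c 1) hc1mem hkey
  rw [hEeq2]
  exact hc1card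
end

section
/- Let Δ be a pure tree of dimension d that is connected in codimension 1, and let F be a facet of Δ. Then the subcomplex generated by F(Δ) \ {F} is connected in codimension 1 if and only if F is a leaf of Δ. -/
variable {V : Type} [DecidableEq V]

lemma proper_of (Γ : Finset (Finset V)) (d : ℕ) (hpure : ∀ A ∈ Γ, A.card = d + 1)
    (g : ℕ → Finset V) (N : ℕ) (hmem : ∀ j ≤ N, g j ∈ Γ)
    (hcard : ∀ j < N, (g j ∩ g (j + 1)).card = d) (hd : N ≠ 0 → 0 < d) :
    IsProperChainSeq Γ g N := by
  refine ⟨⟨hmem, fun i hi => ?_⟩, ?_, fun i hi => ?_⟩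
  · rw [← Finset.card_pos, hcard i hi]
    exact hd (by omega)
  · rw [hpure _ (hmem 0 (Nat.zero_le _)), hpure _ (hmem N le_rfl)]
  · rw [hcard i hi, hpure _ (hmem (i + 1) (by omega))]

lemma proper_card (Γ : Finset (Finset V)) (d : ℕ) (hpure : ∀ A ∈ Γ, A.card = d + 1)
    {c : ℕ → Finset V} {n : ℕ} (hc : IsProperChainSeq Γ c n) :
    ∀ i < n, (c i ∩ c (i + 1)).card = d := by
  intro i hi
  have h1 := hc.2.2 i hi
  have h2 := hpure _ (hc.1.1 (i + 1) (by omega))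
  omega

lemma proper_d_pos (Γ : Finset (Finset V)) (d : ℕ) (hpure : ∀ A ∈ Γ, A.card = d + 1)
    {c : ℕ → Finset V} {n : ℕ} (hc : IsProperChainSeq Γ c n) (hn : n ≠ 0) : 0 < d := by
  have h1 := hc.1.2 0 (by omega)
  have h2 := proper_card Γ d hpure hc 0 (by omega)
  have := Finset.card_pos.2 h1
  omega

lemma glue_facts (Γ : Finset (Finset V)) (d k m : ℕ) (p q : ℕ → Finset V)
    (hpm : ∀ j ≤ k, p j ∈ Γ) (hpc : ∀ j < k, (p j ∩ p (j + 1)).card = d)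
    (hqm : ∀ j ≤ m, q j ∈ Γ) (hqc : ∀ j < m, (q j ∩ q (j + 1)).card = d)
    (hpq : p k = q 0) :
    ∃ g : ℕ → Finset V, (∀ j ≤ k + m, g j ∈ Γ) ∧
      (∀ j < k + m, (g j ∩ g (j + 1)).card = d) ∧ g 0 = p 0 ∧ g (k + m) = q m := by
  set g := fun j => if j < k then p j else q (j - k) with hg
  have hgp : ∀ j ≤ k, g j = p j := by
    intro j hj
    rcases lt_or_eq_of_le hj with h | h
    · simp only [hg, if_pos h]
    · subst h
      show (if j < j then p j else q (j - j)) = p j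
      rw [if_neg (lt_irrefl j), Nat.sub_self]
      exact hpq.symm
  have hgq : ∀ t, g (k + t) = q t := by
    intro t
    have h : ¬ (k + t < k) := by omega
    show (if k + t < k then p (k + t) else q (k + t - k)) = q t
    rw [if_neg h, Nat.add_sub_cancel_left]
  refine ⟨g, ?_, ?_, hgp 0 (Nat.zero_le _), hgq m⟩
  · intro j hj
    rcases le_or_gt j k with h | h
    · rw [hgp j h]; exact hpm j h
    · have e : g j = q (j - k) := by
        have := hgq (j - k)
        rwa [Nat.add_sub_cancel' (le_of_lt h)] at this
      rw [e]; exact hqm _ (by omega)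
  · intro j hj
    rcases lt_or_ge j k with h | h
    · rw [hgp j (le_of_lt h), hgp (j + 1) h]
      exact hpc j h
    · have e1 : g j = q (j - k) := by
        have := hgq (j - k)
        rwa [Nat.add_sub_cancel' h] at this
      have e2 : g (j + 1) = q (j - k + 1) := by
        have := hgq (j - k + 1)
        rwa [show k + (j - k + 1) = j + 1 by omega] at this
      rw [e1, e2]
      exact hqc (j - k) (by omega)

lemma erase_chain (Γ : Finset (Finset V)) (d : ℕ)
    (hanti : ∀ A ∈ Γ, ∀ B ∈ Γ, A ⊆ B → A = B)
    (hpure : ∀ A ∈ Γ, A.card = d + 1) (F G : Finset V) (hGΓ : G ∈ Γ) (hGF : G ≠ F)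
    (hjoint : ∀ H ∈ Γ, H ≠ F → F ∩ H ⊆ F ∩ G) :
    ∀ n c, IsProperChainSeq Γ c n → c 0 ≠ F → c n ≠ F →
      ∃ m c', IsProperChainSeq (Γ.erase F) c' m ∧ c' 0 = c 0 ∧ c' m = c n := by
  have hpureE : ∀ A ∈ Γ.erase F, A.card = d + 1 :=
    fun A hA => hpure A (Finset.mem_of_mem_erase hA)
  intro n
  induction n using Nat.strong_induction_on with
  | _ n IH =>
    intro c hc hc0 hcn
    by_cases hex : ∃ i, i ≤ n ∧ c i = F
    · obtain ⟨i, hin', hciF, hmin⟩ : ∃ i, i ≤ n ∧ c i = F ∧ ∀ j < i, c j ≠ F := by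
        refine ⟨Nat.find hex, (Nat.find_spec hex).1, (Nat.find_spec hex).2, fun j hj hjF => ?_⟩
        exact Nat.find_min hex hj ⟨by have := (Nat.find_spec hex).1; omega, hjF⟩
      have hi0 : i ≠ 0 := fun h => hc0 (by rwa [h] at hciF)
      have hin : i < n := by
        rcases lt_or_eq_of_le hin' with h | h
        · exact h
        · exact absurd (by rwa [h] at hciF) hcn
      obtain ⟨i', rfl⟩ : ∃ i', i = i' + 1 := ⟨i - 1, by omega⟩
      have pcard := proper_card Γ d hpure hc
      have hFΓ : F ∈ Γ := hciF ▸ hc.1.1 (i' + 1) (by omega)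
      have hFcard : F.card = d + 1 := hpure F hFΓ
      have hd : 0 < d := proper_d_pos Γ d hpure hc (by omega)
      have hca : (c i' ∩ F).card = d := by
        have := pcard i' (by omega); rwa [hciF] at this
      have hca' : (F ∩ c i').card = d := by rwa [Finset.inter_comm] at hca
      have hcb : (F ∩ c (i' + 2)).card = d := by
        have := pcard (i' + 1) (by omega); rwa [hciF] at this
      have hc2Γ : c (i' + 2) ∈ Γ := hc.1.1 _ (by omega)
      have hc2F : c (i' + 2) ≠ F := by
        intro h; rw [h, Finset.inter_self, hFcard] at hcb; omega
      have hc1F : c i' ≠ F := hmin i' (by omega)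
      have hc1Γ : c i' ∈ Γ := hc.1.1 _ (by omega)
      have hFGle : (F ∩ G).card ≤ d := by
        by_contra hcon
        have hsub : F ∩ G ⊆ F := Finset.inter_subset_left
        have hle := Finset.card_le_card hsub
        have heq : F ∩ G = F := Finset.eq_of_subset_of_card_le hsub (by omega)
        have hFsub : F ⊆ G := by rw [← heq]; exact Finset.inter_subset_right
        exact hGF (hanti F hFΓ G hGΓ hFsub).symm
      have e1 : F ∩ c i' = F ∩ G :=
        Finset.eq_of_subset_of_card_le (hjoint _ hc1Γ hc1F) (by rw [hca']; exact hFGle)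
      have e2 : F ∩ c (i' + 2) = F ∩ G :=
        Finset.eq_of_subset_of_card_le (hjoint _ hc2Γ hc2F) (by rw [hcb]; exact hFGle)
      have hFGd : (F ∩ G).card = d := by rw [← e1]; exact hca'
      have hkey : d ≤ (c i' ∩ c (i' + 2)).card := by
        have h1 : F ∩ G ⊆ c i' := by rw [← e1]; exact Finset.inter_subset_right
        have h2 : F ∩ G ⊆ c (i' + 2) := by rw [← e2]; exact Finset.inter_subset_right
        calc d = (F ∩ G).card := hFGd.symm
          _ ≤ _ := Finset.card_le_card (Finset.subset_inter h1 h2)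
      have hend : i' + 2 + (n - (i' + 2)) = n := by omega
      have hcs : IsProperChainSeq Γ (fun j => c (i' + 2 + j)) (n - (i' + 2)) :=
        proper_of Γ d hpure _ _ (fun j hj => hc.1.1 _ (by omega))
          (fun j hj => pcard (i' + 2 + j) (by omega)) (fun _ => hd)
      obtain ⟨m, b, hb, hb0, hbm⟩ := IH (n - (i' + 2)) (by omega) _ hcs hc2F
        (by show c (i' + 2 + (n - (i' + 2))) ≠ F; rw [hend]; exact hcn)
      have hb0' : b 0 = c (i' + 2) := hb0
      have hbm' : b m = c n := by rw [hbm]; exact congrArg c hend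
      have hbmem : ∀ j ≤ m, b j ∈ Γ.erase F := hb.1.1
      have hbcard : ∀ j < m, (b j ∩ b (j + 1)).card = d := proper_card _ d hpureE hb
      by_cases hAB : c i' = c (i' + 2)
      · obtain ⟨g, gmem, gcard, g0, gend⟩ := glue_facts (Γ.erase F) d i' m c b
          (fun j hj => Finset.mem_erase.2 ⟨hmin j (by omega), hc.1.1 j (by omega)⟩)
          (fun j hj => pcard j (by omega))
          hbmem hbcard (hAB.trans hb0'.symm)
        exact ⟨i' + m, g, proper_of _ d hpureE g _ gmem gcard (fun _ => hd),
          by rw [g0], by rw [gend, hbm']⟩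
      · have hjcard : (c i' ∩ c (i' + 2)).card = d := by
          have hle : (c i' ∩ c (i' + 2)).card ≤ d + 1 :=
            le_trans (Finset.card_le_card Finset.inter_subset_right) (le_of_eq (hpure _ hc2Γ))
          rcases Nat.lt_or_ge (c i' ∩ c (i' + 2)).card (d + 1) with h | h
          · omega
          · exfalso
            have heq : c i' ∩ c (i' + 2) = c (i' + 2) :=
              Finset.eq_of_subset_of_card_le Finset.inter_subset_right
                (by rw [hpure _ hc2Γ]; omega)
            have hsub : c (i' + 2) ⊆ c i' := by rw [← heq]; exact Finset.inter_subset_left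
            exact hAB (hanti _ hc2Γ _ hc1Γ hsub).symm
        obtain ⟨g, gmem, gcard, g0, gend⟩ := glue_facts (Γ.erase F) d (i' + 1) m
          (fun j => if j < i' + 1 then c j else c (i' + 2)) b
          (fun j hj => by
            by_cases h : j < i' + 1
            · simp only [if_pos h]
              exact Finset.mem_erase.2 ⟨hmin j h, hc.1.1 j (by omega)⟩
            · simp only [if_neg h]
              exact Finset.mem_erase.2 ⟨hc2F, hc2Γ⟩)
          (fun j hj => by
            by_cases h : j + 1 < i' + 1
            · simp only [if_pos hj, if_pos h]
              exact pcard j (by omega)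
            · have hj' : j = i' := by omega
              subst hj'
              simp only [if_pos hj, if_neg h]
              exact hjcard)
          hbmem hbcard
          (by simp only [if_neg (lt_irrefl (i' + 1))]; exact hb0'.symm)
        refine ⟨i' + 1 + m, g, proper_of _ d hpureE g _ gmem gcard (fun _ => hd), ?_, ?_⟩
        · rw [g0]; simp only [if_pos (Nat.succ_pos i')]
        · rw [gend, hbm']
    · push_neg at hex
      exact ⟨n, c, proper_of _ d hpureE c n
        (fun j hj => Finset.mem_erase.2 ⟨hex j hj, hc.1.1 j hj⟩)
        (fun j hj => proper_card Γ d hpure hc j hj)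
        (fun hn => proper_d_pos Γ d hpure hc hn), rfl, rfl⟩

lemma lemA (Γ : Finset (Finset V)) (d : ℕ)
    (hanti : ∀ A ∈ Γ, ∀ B ∈ Γ, A ⊆ B → A = B) (hpure : IsPure Γ d)
    (L : Finset V) (hL : IsLeaf Γ L) (hcc : ConnCodim1 Γ) : ConnCodim1 (Γ.erase L) := by
  intro A hA B hB hcard
  have hAΓ := Finset.mem_of_mem_erase hA
  have hBΓ := Finset.mem_of_mem_erase hB
  obtain ⟨n, c, hc, hc0, hcn⟩ := hcc A hAΓ B hBΓ hcard
  rcases hL.2 with hsing | ⟨G, hGΓ, hGL, hjoint⟩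
  · exact absurd (by rw [hsing] at hAΓ; exact Finset.mem_singleton.1 hAΓ)
      (Finset.mem_erase.1 hA).1
  · obtain ⟨m, c', hc', h0, hm⟩ := erase_chain Γ d hanti hpure L G hGΓ hGL hjoint n c hc
      (by rw [hc0]; exact (Finset.mem_erase.1 hA).1)
      (by rw [hcn]; exact (Finset.mem_erase.1 hB).1)
    exact ⟨m, c', hc', by rw [h0, hc0], by rw [hm, hcn]⟩

lemma lemB (d : ℕ) : ∀ N (Γ : Finset (Finset V)), Γ.card ≤ N →
    (∀ A ∈ Γ, ∀ B ∈ Γ, A ⊆ B → A = B) → IsPure Γ d → HasLeafProp Γ → ConnCodim1 Γ →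
    ∀ F ∈ Γ, ConnCodim1 (Γ.erase F) → IsLeaf Γ F := by
  intro N
  induction N with
  | zero =>
    intro Γ hcard _ _ _ _ F hF _
    rw [Nat.le_zero, Finset.card_eq_zero] at hcard
    subst hcard; simp at hF
  | succ N IH =>
    intro Γ hΓcard hanti hpure hlp hcc F hF hccE
    obtain ⟨L, hL⟩ := hlp Γ (subset_refl Γ) ⟨F, hF⟩
    by_cases hLF : L = F
    · exact hLF ▸ hL
    by_cases h1 : Γ.erase F = ∅
    · refine ⟨hF, Or.inl (Finset.eq_singleton_iff_unique_mem.2 ⟨hF, fun H hH => ?_⟩)⟩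
      by_contra hne
      exact absurd (Finset.mem_erase.2 ⟨hne, hH⟩) (by simp [h1])
    by_cases h2 : ∃ K, Γ.erase F = {K}
    · obtain ⟨K, hK⟩ := h2
      have hKmem : K ∈ Γ.erase F := by simp [hK]
      refine ⟨hF, Or.inr ⟨K, Finset.mem_of_mem_erase hKmem, (Finset.mem_erase.1 hKmem).1,
        fun H hH hHF => ?_⟩⟩
      have hmem : H ∈ Γ.erase F := Finset.mem_erase.2 ⟨hHF, hH⟩
      rw [hK, Finset.mem_singleton] at hmem
      rw [hmem]
    have hcard2 : 1 < (Γ.erase F).card := by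
      rcases Nat.lt_or_ge 1 (Γ.erase F).card with h | h
      · exact h
      · exfalso
        rcases Nat.le_one_iff_eq_zero_or_eq_one.1 h with h | h
        · exact h1 (Finset.card_eq_zero.1 h)
        · exact h2 (Finset.card_eq_one.1 h)
    have hLmem : L ∈ Γ.erase F := Finset.mem_erase.2 ⟨hLF, hL.1⟩
    have hΓL : Γ ≠ {L} := fun h => hLF (Finset.mem_singleton.1 (h ▸ hF)).symm
    obtain ⟨K, hKΓ, hKL, hKjoint⟩ := hL.2.resolve_left hΓL
    have hpureE : ∀ A ∈ Γ.erase F, A.card = d + 1 :=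
      fun A hA => hpure _ (Finset.mem_of_mem_erase hA)
    obtain ⟨W, hWΓ, hWL, hWF, hFLW, hleafE⟩ :
        ∃ W, W ∈ Γ ∧ W ≠ L ∧ W ≠ F ∧ F ∩ L ⊆ W ∧ IsLeaf (Γ.erase F) L := by
      by_cases hKF : K = F
      · obtain ⟨M, hM, hML⟩ := Finset.exists_mem_ne hcard2 L
        obtain ⟨n, c, hcp, hc0, hcn⟩ := hccE L hLmem M hM (by
          rw [hpure _ (Finset.mem_of_mem_erase hM), hpure _ hL.1])
        have hn : n ≠ 0 := fun h => hML (by rw [← hcn, h, hc0])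
        have hcd := proper_card _ d hpureE hcp 0 (by omega)
        rw [hc0] at hcd
        have hc1 : c 1 ∈ Γ.erase F := hcp.1.1 1 (by omega)
        have hc1Γ : c 1 ∈ Γ := Finset.mem_of_mem_erase hc1
        have hc1F : c 1 ≠ F := (Finset.mem_erase.1 hc1).1
        have hLcard : L.card = d + 1 := hpure _ hL.1
        have hc1L : c 1 ≠ L := by
          intro h; rw [h, Finset.inter_self, hLcard] at hcd; omega
        have hLFle : (L ∩ F).card ≤ d := by
          by_contra hcon
          have hsub : L ∩ F ⊆ L := Finset.inter_subset_left
          have hle := Finset.card_le_card hsub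
          have heq : L ∩ F = L := Finset.eq_of_subset_of_card_le hsub (by omega)
          have : L ⊆ F := by rw [← heq]; exact Finset.inter_subset_right
          exact hLF (hanti L hL.1 F hF this)
        have hsub1 : L ∩ c 1 ⊆ L ∩ F := by
          have := hKjoint (c 1) hc1Γ hc1L
          rwa [hKF] at this
        have heq : L ∩ c 1 = L ∩ F :=
          Finset.eq_of_subset_of_card_le hsub1 (by rw [hcd]; exact hLFle)
        refine ⟨c 1, hc1Γ, hc1L, hc1F, ?_, ?_⟩
        · intro x hx
          rw [Finset.mem_inter] at hx
          have hx' : x ∈ L ∩ F := Finset.mem_inter.2 ⟨hx.2, hx.1⟩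
          rw [← heq] at hx'
          exact (Finset.mem_inter.1 hx').2
        · refine ⟨hLmem, Or.inr ⟨c 1, hc1, hc1L, fun H hH hHL => ?_⟩⟩
          have hHΓ : H ∈ Γ := Finset.mem_of_mem_erase hH
          have h3 : L ∩ H ⊆ L ∩ F := by
            have := hKjoint H hHΓ hHL; rwa [hKF] at this
          rw [heq]; exact h3
      · refine ⟨K, hKΓ, hKL, hKF, ?_, ?_⟩
        · intro x hx
          rw [Finset.mem_inter] at hx
          have hx' : x ∈ L ∩ K :=
            hKjoint F hF (fun h => hLF h.symm) (Finset.mem_inter.2 ⟨hx.2, hx.1⟩)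
          exact (Finset.mem_inter.1 hx').2
        · exact ⟨hLmem, Or.inr ⟨K, Finset.mem_erase.2 ⟨hKF, hKΓ⟩, hKL,
            fun H hH hHL => hKjoint H (Finset.mem_of_mem_erase hH) hHL⟩⟩
    have hccL : ConnCodim1 (Γ.erase L) := lemA Γ d hanti hpure L hL hcc
    have hccFL : ConnCodim1 ((Γ.erase F).erase L) := lemA (Γ.erase F) d
      (fun A hA B hB => hanti A (Finset.mem_of_mem_erase hA) B (Finset.mem_of_mem_erase hB))
      hpureE L hleafE hccE
    have hcomm : (Γ.erase F).erase L = (Γ.erase L).erase F := by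
      ext x; simp only [Finset.mem_erase]; tauto
    rw [hcomm] at hccFL
    have hFmemL : F ∈ Γ.erase L := Finset.mem_erase.2 ⟨fun h => hLF h.symm, hF⟩
    have hFleafL : IsLeaf (Γ.erase L) F := IH (Γ.erase L)
      (by rw [Finset.card_erase_of_mem hL.1]; omega)
      (fun A hA B hB => hanti A (Finset.mem_of_mem_erase hA) B (Finset.mem_of_mem_erase hB))
      (fun A hA => hpure A (Finset.mem_of_mem_erase hA))
      (fun Γ' hΓ' h' => hlp Γ' (hΓ'.trans (Finset.erase_subset L Γ)) h')
      hccL F hFmemL hccFL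
    rcases hFleafL.2 with hsing | ⟨G, hGmem, hGF, hGjoint⟩
    · exfalso
      have hsub : Γ.erase F ⊆ {L} := by
        intro H hH
        have hHΓ := Finset.mem_of_mem_erase hH
        have hHF := (Finset.mem_erase.1 hH).1
        by_contra hcon
        rw [Finset.mem_singleton] at hcon
        have hmem : H ∈ Γ.erase L := Finset.mem_erase.2 ⟨hcon, hHΓ⟩
        rw [hsing, Finset.mem_singleton] at hmem
        exact hHF hmem
      have := Finset.card_le_card hsub
      simp at this; omega
    · refine ⟨hF, Or.inr ⟨G, Finset.mem_of_mem_erase hGmem, hGF, fun H hH hHF => ?_⟩⟩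
      by_cases hHL : H = L
      · subst hHL
        have hs1 : F ∩ H ⊆ F ∩ W := Finset.subset_inter Finset.inter_subset_left hFLW
        have hs2 : F ∩ W ⊆ F ∩ G := hGjoint W (Finset.mem_erase.2 ⟨hWL, hWΓ⟩) hWF
        exact hs1.trans hs2
      · exact hGjoint H (Finset.mem_erase.2 ⟨hHL, hH⟩) hHF


/-- Corollary 1.14. Let `Δ` be a pure tree of dimension `d`, connected in
codimension 1, and `F` a facet. The subcomplex generated by `F(Δ) \ {F}` is connected in
codimension 1 iff `F` is a leaf of `Δ`. -/
theorem stmt5 {V : Type} [DecidableEq V] (Δ : Finset (Finset V)) (hΔ : IsComplex Δ)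
    (d : ℕ) (hpure : IsPure Δ d) (htree : IsTree Δ) (hcc : ConnCodim1 Δ)
    (F : Finset V) (hF : F ∈ Δ) :
    ConnCodim1 (Δ.erase F) ↔ IsLeaf Δ F := by
  constructor
  · intro hccE
    exact lemB d Δ.card Δ le_rfl hΔ.2 hpure htree.2.2 hcc F hF hccE
  · intro hleaf
    exact lemA Δ d hΔ.2 hpure F hleaf hcc
end

section
/- Let Δ be a pure tree which is connected in codimension 1 and has more than one facet. Then Δ has at least two leaves. -/
variable {V : Type} [DecidableEq V]

theorem two_leaves_aux {V : Type} [DecidableEq V] :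
    ∀ (Δ : Finset (Finset V)), HasLeafProp Δ → 1 < Δ.card →
      ∃ F G, F ≠ G ∧ IsLeaf Δ F ∧ IsLeaf Δ G := by
  intro Δ
  induction Δ using Finset.strongInduction with
  | _ Δ ih =>
    intro hlp hcard
    obtain ⟨F, hFmem, hcases⟩ := hlp Δ (subset_refl _)
      (Finset.card_pos.mp (lt_trans one_pos hcard))
    rcases hcases with h1 | ⟨G, hGmem, hGF, hjoint⟩
    · simp [h1] at hcard
    · set Δ' := Δ.erase F with hΔ'
      have hsub : Δ' ⊆ Δ := Finset.erase_subset _ _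
      have hlp' : HasLeafProp Δ' := fun Γ hΓ => hlp Γ (hΓ.trans hsub)
      have hGmem' : G ∈ Δ' := Finset.mem_erase.mpr ⟨hGF, hGmem⟩
      by_cases h2 : 1 < Δ'.card
      · obtain ⟨G1, G2, h12, hL1, hL2⟩ := ih Δ' (Finset.erase_ssubset hFmem) hlp' h2
        have key : ∀ G', IsLeaf Δ' G' → G' ≠ G → IsLeaf Δ G' := by
          intro G' ⟨hG'mem, hG'cases⟩ hG'G
          have hG'F : G' ≠ F := (Finset.mem_erase.mp hG'mem).1
          rcases hG'cases with h1' | ⟨J, hJmem, hJG', hJjoint⟩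
          · exfalso; rw [h1'] at h2; simp at h2
          · refine ⟨hsub hG'mem, Or.inr ⟨J, hsub hJmem, hJG', ?_⟩⟩
            intro H hHmem hHG'
            by_cases hHF : H = F
            · have hsubG : H ∩ G' ⊆ H ∩ G := by
                rw [hHF]; exact hjoint G' (hsub hG'mem) hG'F
              have : G' ∩ H ⊆ G' ∩ G := by
                intro x hx
                rw [Finset.mem_inter] at hx ⊢
                refine ⟨hx.1, ?_⟩
                have : x ∈ H ∩ G := hsubG (Finset.mem_inter.mpr ⟨hx.2, hx.1⟩)
                exact (Finset.mem_inter.mp this).2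
              exact this.trans (hJjoint G hGmem' (Ne.symm hG'G))
            · exact hJjoint H (Finset.mem_erase.mpr ⟨hHF, hHmem⟩) hHG'
        by_cases hG1 : G1 = G
        · have hG2 : G2 ≠ G := fun h => h12 (hG1.trans h.symm)
          exact ⟨F, G2, fun h => (Finset.mem_erase.mp hL2.1).1 h.symm,
            ⟨hFmem, Or.inr ⟨G, hGmem, hGF, hjoint⟩⟩, key G2 hL2 hG2⟩
        · exact ⟨F, G1, fun h => (Finset.mem_erase.mp hL1.1).1 h.symm,
            ⟨hFmem, Or.inr ⟨G, hGmem, hGF, hjoint⟩⟩, key G1 hL1 hG1⟩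
      · -- Δ' has exactly one element, namely G; so Δ = {F, G}
        have hone : Δ'.card = 1 := by
          have h0 : 0 < Δ'.card := Finset.card_pos.mpr ⟨G, hGmem'⟩
          omega
        have hΔ'eq : Δ' = {G} := by
          obtain ⟨x, hx⟩ := Finset.card_eq_one.mp hone
          rw [hx] at hGmem' ⊢
          simp at hGmem'; rw [hGmem']
        have hGleaf : IsLeaf Δ G := by
          refine ⟨hGmem, Or.inr ⟨F, hFmem, fun h => hGF h.symm, ?_⟩⟩
          intro H hHmem hHG
          have : H = F := by
            by_contra hHF
            have : H ∈ Δ' := Finset.mem_erase.mpr ⟨hHF, hHmem⟩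
            rw [hΔ'eq] at this; simp at this; exact hHG this
          rw [this]
        exact ⟨F, G, fun h => hGF h.symm,
          ⟨hFmem, Or.inr ⟨G, hGmem, hGF, hjoint⟩⟩, hGleaf⟩

/-- Proposition 1.15. A pure tree which is connected in codimension 1 and
has more than one facet has at least two leaves. -/
theorem stmt6 {V : Type} [DecidableEq V] (Δ : Finset (Finset V)) (hΔ : IsComplex Δ)
    (d : ℕ) (hpure : IsPure Δ d) (htree : IsTree Δ) (hcc : ConnCodim1 Δ)
    (hcard : 1 < Δ.card) :
    ∃ F G, F ≠ G ∧ IsLeaf Δ F ∧ IsLeaf Δ G := by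
  exact two_leaves_aux Δ htree.2.2 hcard
end

section
/- Let M be a torsion-free Z^n-graded module over the polynomial ring R = K[x_1,...,x_n], minimally generated by homogeneous elements y_1, ..., y_s whose multidegrees lie in Z^n_{≥0} and all have t-th coordinate equal to 0, for some fixed index t. Then for every i and every a ∈ Z^n with b_{i,a}(M) ≠ 0 (the multigraded Betti numbers of M), the t-th coordinate of a is 0. -/
noncomputable def kd (K : Type) [Field K] (N : ℕ) (M : Type) [AddCommGroup M]
    [Module (MvPolynomial (Fin N) K) M] :
    (Finset (Fin N) → M) →ₗ[MvPolynomial (Fin N) K] (Finset (Fin N) → M) where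
  toFun z s := ∑ j ∈ sᶜ, ((-1 : ℤ) ^ ((s.filter (· < j)).card)) •
      ((MvPolynomial.X j : MvPolynomial (Fin N) K) • z (insert j s))
  map_add' x y := by
    funext s
    try dsimp only
    simp only [Pi.add_apply, smul_add, Finset.sum_add_distrib]
  map_smul' r x := by
    funext s
    try dsimp only
    simp only [Pi.smul_apply, RingHom.id_apply, Finset.smul_sum]
    exact Finset.sum_congr rfl fun j _ => by
      rw [smul_comm r ((-1 : ℤ) ^ ((s.filter (· < j)).card)), smul_comm r (MvPolynomial.X j : MvPolynomial (Fin N) K)]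

noncomputable def ZB (K : Type) [Field K] (N : ℕ) (M : Type) [AddCommGroup M]
    [Module (MvPolynomial (Fin N) K) M] : Submodule (MvPolynomial (Fin N) K) (Finset (Fin N) → M) :=
  LinearMap.ker (kd K N M)

noncomputable def Bd (K : Type) [Field K] (N : ℕ) (M : Type) [AddCommGroup M]
    [Module (MvPolynomial (Fin N) K) M] : Submodule (MvPolynomial (Fin N) K) (Finset (Fin N) → M) :=
  LinearMap.range (kd K N M)

@[reducible] def Hmod (K : Type) [Field K] (N : ℕ) (M : Type) [AddCommGroup M]
    [Module (MvPolynomial (Fin N) K) M] :=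
  (ZB K N M) ⧸ (Submodule.comap (ZB K N M).subtype (Bd K N M))

open scoped Classical in
noncomputable def classOf (K : Type) [Field K] (N : ℕ) (M : Type) [AddCommGroup M]
    [Module (MvPolynomial (Fin N) K) M] (z : Finset (Fin N) → M) : Hmod K N M :=
  if h : z ∈ ZB K N M then Submodule.Quotient.mk ⟨z, h⟩ else 0

/-!
The generators have `t`-degree `0`, so every homogeneous element of `M` has nonnegative
`t`-degree, and every one of positive `t`-degree is divisible by `x_t`. Hence a homogeneous
Koszul cycle `z` of degree `a` vanishes if `a t < 0`. If `a t > 0`, write `z_s = x_t u_s` for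
`t ∉ s`; then `z - ∂(e_t ∧ u)` is a cycle supported on the sets containing `t`, and such a cycle
is zero because `x_t` is a nonzerodivisor on `M`. So `z` is a boundary.
-/

open MvPolynomial
open scoped Pointwise

section Koszul

variable {K : Type} [Field K] {N : ℕ} {M : Type} [AddCommGroup M]
  [Module (MvPolynomial (Fin N) K) M]

lemma kd_apply (z : Finset (Fin N) → M) (s : Finset (Fin N)) :
    kd K N M z s = ∑ j ∈ sᶜ, ((-1 : ℤ) ^ (s.filter (· < j)).card) •
      (X j : MvPolynomial (Fin N) K) • z (insert j s) :=
  rfl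

lemma neg_one_pow_smul_neg_one_pow_smul (n : ℕ) (x : M) :
    ((-1 : ℤ) ^ n) • ((-1 : ℤ) ^ n) • x = x := by
  rw [smul_smul, ← pow_add, Even.neg_one_pow ⟨n, rfl⟩, one_smul]

lemma card_filter_lt_insert (i j : Fin N) (s : Finset (Fin N)) (hi : i ∉ s) :
    ((insert i s).filter (· < j)).card = (s.filter (· < j)).card + if i < j then 1 else 0 := by
  rw [Finset.filter_insert]
  split
  · rw [Finset.card_insert_of_notMem (fun h => hi (Finset.mem_of_mem_filter i h))]
  · rw [add_zero]

lemma neg_one_pow_card_filter_lt_insert_mul (i j : Fin N) (s : Finset (Fin N)) (hi : i ∉ s)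
    (hj : j ∉ s) (hij : i ≠ j) :
    (-1 : ℤ) ^ (s.filter (· < i)).card * (-1 : ℤ) ^ ((insert i s).filter (· < j)).card =
      -((-1 : ℤ) ^ (s.filter (· < j)).card * (-1 : ℤ) ^ ((insert j s).filter (· < i)).card) := by
  rw [card_filter_lt_insert i j s hi, card_filter_lt_insert j i s hj]
  rcases lt_or_gt_of_ne hij with h | h
  · rw [if_pos h, if_neg (asymm h), pow_add, pow_add]; ring
  · rw [if_neg (asymm h), if_pos h, pow_add, pow_add]; ring

lemma sum_sum_erase_eq_zero_of_antisymm {ι β : Type*} [DecidableEq ι] [AddCommGroup β]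
    (A : Finset ι) (f : ι → ι → β) (hf : ∀ i ∈ A, ∀ j ∈ A, i ≠ j → f j i = -f i j) :
    ∑ i ∈ A, ∑ j ∈ A.erase i, f i j = 0 := by
  rw [Finset.sum_sigma']
  refine Finset.sum_involution (fun p _ => ⟨p.2, p.1⟩) ?_ ?_ ?_ ?_
  · rintro ⟨i, j⟩ hp
    obtain ⟨hi, hj⟩ := Finset.mem_sigma.1 hp
    obtain ⟨hji, hj⟩ := Finset.mem_erase.1 hj
    rw [hf i hi j hj (Ne.symm hji), add_neg_cancel]
  · rintro ⟨i, j⟩ hp _ h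
    exact (Finset.mem_erase.1 (Finset.mem_sigma.1 hp).2).1 (congrArg Sigma.fst h)
  · rintro ⟨i, j⟩ hp
    obtain ⟨hi, hj⟩ := Finset.mem_sigma.1 hp
    obtain ⟨hji, hj⟩ := Finset.mem_erase.1 hj
    exact Finset.mem_sigma.2 ⟨hj, Finset.mem_erase.2 ⟨Ne.symm hji, hi⟩⟩
  · intro p _
    rfl

lemma kd_kd (z : Finset (Fin N) → M) : kd K N M (kd K N M z) = 0 := by
  funext s
  simp only [kd_apply, Finset.compl_insert, Finset.smul_sum, Pi.zero_apply]
  refine sum_sum_erase_eq_zero_of_antisymm sᶜ _ fun i hi j hj hij => ?_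
  rw [Finset.mem_compl] at hi hj
  simp only [smul_comm (X _ : MvPolynomial (Fin N) K) ((-1 : ℤ) ^ _), smul_smul,
    Finset.insert_comm i j, mul_comm (X i : MvPolynomial (Fin N) K),
    neg_one_pow_card_filter_lt_insert_mul i j s hi hj hij, neg_smul, neg_neg]

/-- `extMul t u` is `e_t ∧ u`: the sign moves `e_t` into its place in `e_s`. -/
def extMul (t : Fin N) (u : Finset (Fin N) → M) : Finset (Fin N) → M :=
  fun s => if t ∈ s then ((-1 : ℤ) ^ ((s.erase t).filter (· < t)).card) • u (s.erase t) else 0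

lemma kd_extMul_apply_of_notMem (t : Fin N) (u : Finset (Fin N) → M) {s : Finset (Fin N)}
    (hs : t ∉ s) : kd K N M (extMul t u) s = (X t : MvPolynomial (Fin N) K) • u s := by
  rw [kd_apply, Finset.sum_eq_single t]
  · rw [extMul, if_pos (Finset.mem_insert_self t s), Finset.erase_insert hs,
      smul_comm, neg_one_pow_smul_neg_one_pow_smul]
  · intro j _ hjt
    rw [extMul, if_neg (by simp [hjt.symm, hs]), smul_zero, smul_zero]
  · exact fun h => absurd (Finset.mem_compl.2 hs) h

lemma eq_zero_of_mem_ZB_of_forall_notMem (t : Fin N)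
    (hX : ∀ m : M, (X t : MvPolynomial (Fin N) K) • m = 0 → m = 0) {z : Finset (Fin N) → M}
    (hz : z ∈ ZB K N M) (hzt : ∀ s, t ∉ s → z s = 0) : z = 0 := by
  funext s
  by_cases hts : t ∈ s
  swap
  · exact hzt s hts
  have hcycle : kd K N M z (s.erase t) = 0 := congrFun (LinearMap.mem_ker.1 hz) _
  rw [kd_apply, Finset.sum_eq_single t, Finset.insert_erase hts] at hcycle
  · refine hX _ ?_
    rw [← neg_one_pow_smul_neg_one_pow_smul _ ((X t : MvPolynomial (Fin N) K) • z s), hcycle,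
      smul_zero]
  · intro j _ hjt
    rw [hzt _ (by simp [hjt.symm]), smul_zero, smul_zero]
  · exact fun h => absurd (Finset.mem_compl.2 (Finset.notMem_erase t s)) h

lemma mem_Bd_of_forall_notMem_exists_X_smul (t : Fin N)
    (hX : ∀ m : M, (X t : MvPolynomial (Fin N) K) • m = 0 → m = 0) {z : Finset (Fin N) → M}
    (hz : z ∈ ZB K N M) (hzt : ∀ s, t ∉ s → ∃ m, (X t : MvPolynomial (Fin N) K) • m = z s) :
    z ∈ Bd K N M := by
  choose! u hu using hzt
  refine ⟨extMul t u, sub_eq_zero.1 (eq_zero_of_mem_ZB_of_forall_notMem t hX ?_ fun s hs => ?_)⟩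
  · exact Submodule.sub_mem _ (LinearMap.mem_ker.2 (kd_kd _)) hz
  · rw [Pi.sub_apply, kd_extMul_apply_of_notMem t u hs, hu s hs, sub_self]

end Koszul

section Grading

variable {K : Type} [Field K] {N : ℕ} {M : Type} [AddCommGroup M]
  [Module (MvPolynomial (Fin N) K) M] [Module K M] {ℳ : (Fin N → ℤ) → Submodule K M}
  (hgr : ∀ (α : Fin N → ℤ) (j : Fin N), ∀ x ∈ ℳ α,
    (X j : MvPolynomial (Fin N) K) • x ∈ ℳ (α + Pi.single j 1))

include hgr in
lemma X_pow_smul_mem (j : Fin N) (b : ℕ) {α : Fin N → ℤ} {x : M} (hx : x ∈ ℳ α) :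
    (X j : MvPolynomial (Fin N) K) ^ b • x ∈ ℳ (α + Pi.single j (b : ℤ)) := by
  induction b with
  | zero => simpa using hx
  | succ b ih =>
    rw [pow_succ', mul_smul, Nat.cast_succ, Pi.single_add, ← add_assoc]
    exact hgr _ j _ ih

include hgr in
lemma monomial_smul_mem (β : Fin N →₀ ℕ) {α : Fin N → ℤ} {x : M} (hx : x ∈ ℳ α) :
    monomial β (1 : K) • x ∈ ℳ (α + fun k => (β k : ℤ)) := by
  induction β using Finsupp.induction generalizing α x with
  | zero => simpa [← Pi.zero_def] using hx
  | single_add j b β _ _ ih =>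
    rw [monomial_single_add, mul_smul]
    convert X_pow_smul_mem hgr j b (ih hx) using 2
    funext k
    simp only [Pi.add_apply, Finsupp.add_apply, Nat.cast_add, Pi.single_apply,
      Finsupp.single_apply, eq_comm (a := j)]
    split_ifs <;> push_cast <;> ring

variable [IsScalarTower K (MvPolynomial (Fin N) K) M] {s : ℕ} {y : Fin s → M}
  (hgen : Submodule.span (MvPolynomial (Fin N) K) (Set.range y) = ⊤)

include hgen in
lemma span_monomial_smul_eq_top :
    Submodule.span K (Set.range (fun β : Fin N →₀ ℕ => monomial β (1 : K)) • Set.range y) = ⊤ := by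
  have hmon : Submodule.span K (Set.range fun β : Fin N →₀ ℕ => monomial β (1 : K)) = ⊤ := by
    simpa using (basisMonomials (Fin N) K).span_eq
  rw [Submodule.span_smul_of_span_eq_top hmon, hgen, Submodule.restrictScalars_top]

variable (hdecomp : DirectSum.IsInternal ℳ) {dy : Fin s → Fin N → ℤ} (hy : ∀ i, y i ∈ ℳ (dy i))

include hgr hgen hdecomp hy in
lemma le_of_forall_monomial_smul_mem (V : Submodule K M) (γ : Fin N → ℤ)
    (hV : ∀ i β, (dy i + fun k => (β k : ℤ)) = γ → monomial β (1 : K) • y i ∈ V) : ℳ γ ≤ V := by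
  have := hdecomp.chooseDecomposition
  suffices hproj : ∀ x, (DirectSum.decompose ℳ x γ : M) ∈ V from
    fun m hm => DirectSum.decompose_of_mem_same ℳ hm ▸ hproj m
  intro x
  induction (span_monomial_smul_eq_top hgen).ge (Submodule.mem_top (x := x))
    using Submodule.span_induction with
  | mem x hx =>
    obtain ⟨_, ⟨β, rfl⟩, _, ⟨i, rfl⟩, rfl⟩ := hx
    have hmem := monomial_smul_mem hgr β (hy i)
    by_cases hdeg : (dy i + fun k => (β k : ℤ)) = γ
    · rw [DirectSum.decompose_of_mem_same ℳ (hdeg ▸ hmem)]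
      exact hV i β hdeg
    · rw [DirectSum.decompose_of_mem_ne ℳ hmem hdeg]
      exact V.zero_mem
  | zero => simp
  | add x x' _ _ hx hx' =>
    rw [DirectSum.decompose_add, DirectSum.add_apply, Submodule.coe_add]
    exact V.add_mem hx hx'
  | smul c x _ hx =>
    rw [DirectSum.decompose_smul, DirectSum.smul_apply, Submodule.coe_smul]
    exact V.smul_mem c hx

variable {t : Fin N} (ht : ∀ i, dy i t = 0)

include hgr hgen hdecomp hy ht in
lemma eq_zero_of_mem_of_apply_neg {γ : Fin N → ℤ} (hγ : γ t < 0) {m : M} (hm : m ∈ ℳ γ) :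
    m = 0 := by
  refine (Submodule.mem_bot K).1 (le_of_forall_monomial_smul_mem hgr hgen hdecomp hy ⊥ γ
    (fun i β hβ => absurd (congrFun hβ t) ?_) hm)
  simp only [Pi.add_apply, ht i, zero_add]
  omega

include hgr hgen hdecomp hy ht in
lemma exists_X_smul_eq_of_mem_of_apply_pos {γ : Fin N → ℤ} (hγ : 0 < γ t) {m : M} (hm : m ∈ ℳ γ) :
    ∃ m', (X t : MvPolynomial (Fin N) K) • m' = m := by
  let V := LinearMap.range (DistribSMul.toLinearMap K M (X t : MvPolynomial (Fin N) K))
  refine le_of_forall_monomial_smul_mem hgr hgen hdecomp hy V γ (fun i β hβ => ?_) hm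
  have hβt : 1 ≤ β t := by
    have := congrFun hβ t
    simp only [Pi.add_apply, ht i, zero_add] at this
    omega
  refine ⟨monomial (β - Finsupp.single t 1) (1 : K) • y i, ?_⟩
  rw [DistribSMul.toLinearMap_apply, ← mul_smul, ← pow_one (X t), ← monomial_single_add,
    add_tsub_cancel_of_le (Finsupp.single_le_iff.2 hβt)]

end Grading

/-- `b_{i,a}(M) = dim_K H_i(x; M)_a`, so a nonzero Betti number in degree `a` is encoded as a
homogeneous Koszul cycle of degree `a` that is not a boundary (`e_s` has degree `1_s`). -/
theorem stmt8_general (K : Type) [Field K] (N : ℕ) (M : Type) [AddCommGroup M]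
    [Module (MvPolynomial (Fin N) K) M] [Module K M]
    [IsScalarTower K (MvPolynomial (Fin N) K) M]
    (ℳ : (Fin N → ℤ) → Submodule K M) (hdecomp : DirectSum.IsInternal ℳ)
    (hgr : ∀ (α : Fin N → ℤ) (j : Fin N), ∀ x ∈ ℳ α,
      (MvPolynomial.X j : MvPolynomial (Fin N) K) • x ∈ ℳ (α + Pi.single j 1))
    (htf : ∀ (r : MvPolynomial (Fin N) K) (x : M), r • x = 0 → r = 0 ∨ x = 0)
    (s : ℕ) (y : Fin s → M) (dy : Fin s → Fin N → ℤ) (t : Fin N)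
    (hy : ∀ i, y i ∈ ℳ (dy i)) (ht : ∀ i, dy i t = 0)
    (hgen : Submodule.span (MvPolynomial (Fin N) K) (Set.range y) = ⊤) :
    ∀ a : Fin N → ℤ,
      (∃ z : Finset (Fin N) → M, z ∈ ZB K N M ∧ z ∉ Bd K N M ∧
        ∀ s₂ : Finset (Fin N), z s₂ ∈ ℳ (a - fun k => if k ∈ s₂ then 1 else 0)) →
      a t = 0 := by
  rintro a ⟨z, hz, hz_not_mem, hdeg⟩
  have hdeg_t (s₂ : Finset (Fin N)) :
      (a - fun k => if k ∈ s₂ then (1 : ℤ) else 0) t = a t - if t ∈ s₂ then 1 else 0 := rfl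
  rcases lt_trichotomy (a t) 0 with hneg | hzero | hpos
  · have hz0 : z = 0 := funext fun s₂ => eq_zero_of_mem_of_apply_neg hgr hgen hdecomp hy ht
      (by rw [hdeg_t]; split_ifs <;> omega) (hdeg s₂)
    exact absurd (hz0 ▸ (Bd K N M).zero_mem) hz_not_mem
  · exact hzero
  · refine absurd (mem_Bd_of_forall_notMem_exists_X_smul t
      (fun m hm => (htf _ m hm).resolve_left (X_ne_zero t)) hz fun s₂ hs => ?_) hz_not_mem
    exact exists_X_smul_eq_of_mem_of_apply_pos hgr hgen hdecomp hy ht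
      (by rw [hdeg_t, if_neg hs]; omega) (hdeg s₂)

/-- Lemma 2.1. Let `M` be a torsion-free `ℤ^n`-graded module over
`R = K[x_1,…,x_N]`, minimally generated by homogeneous elements `y_1,…,y_s` whose
multidegrees are componentwise nonnegative and have `t`-th coordinate `0`. Then every
multidegree `a` with `b_{i,a}(M) ≠ 0` — equivalently (by `Tor_i(K,M)_a ≅ H_i(x;M)_a`),
every multidegree `a` supporting a homogeneous Koszul cycle which is not a boundary —
satisfies `a t = 0`. -/
theorem stmt8 (K : Type) [Field K] (N : ℕ) (M : Type) [AddCommGroup M]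
    [Module (MvPolynomial (Fin N) K) M] [Module K M]
    [IsScalarTower K (MvPolynomial (Fin N) K) M]
    (ℳ : (Fin N → ℤ) → Submodule K M) (hdecomp : DirectSum.IsInternal ℳ)
    (hgr : ∀ (α : Fin N → ℤ) (j : Fin N), ∀ x ∈ ℳ α,
      (MvPolynomial.X j : MvPolynomial (Fin N) K) • x ∈ ℳ (α + Pi.single j 1))
    (htf : ∀ (r : MvPolynomial (Fin N) K) (x : M), r • x = 0 → r = 0 ∨ x = 0)
    (s : ℕ) (y : Fin s → M) (dy : Fin s → Fin N → ℤ) (t : Fin N)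
    (hy : ∀ i, y i ∈ ℳ (dy i)) (hpos : ∀ i k, 0 ≤ dy i k) (ht : ∀ i, dy i t = 0)
    (hgen : Submodule.span (MvPolynomial (Fin N) K) (Set.range y) = ⊤)
    (hminimal : ∀ i, y i ∉ Submodule.span (MvPolynomial (Fin N) K) (y '' {i₂ | i₂ ≠ i})) :
    ∀ a : Fin N → ℤ,
      (∃ z : Finset (Fin N) → M, z ∈ ZB K N M ∧ z ∉ Bd K N M ∧
        ∀ s₂ : Finset (Fin N), z s₂ ∈ ℳ (a - fun k => if k ∈ s₂ then 1 else 0)) →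
      a t = 0 :=
  stmt8_general K N M ℳ hdecomp hgr htf s y dy t hy ht hgen
end

section
/- Let Δ be a forest with facet ideal I(Δ), F a facet of Δ, f the monomial corresponding to F, and J the ideal generated by the monomials of the other facets. Then the simplicial complex whose facet ideal is the colon ideal J : f is again a forest; its facets are among the sets G \ F for facets G ≠ F of Δ. -/
/-!
For squarefree monomials, `x^E · x^F` lies in the ideal generated by `x^G` iff `G \ F ⊆ E`.
Hence each minimal generator `x^E` of `J : f` is some `x^(G \ F)` with `G ≠ F`: `E` contains
some `G \ F`, and `x^(G \ F) ∈ J : f` is in turn divisible by a generator, which by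
minimality must be `x^E` itself. A subcomplex of these facets is then the image of a
subcomplex of `Δ` under `G ↦ G \ F`, injective on it, and removing `F` from all facets keeps
the leaf condition `L ∩ H ⊆ L ∩ G'` intact.
-/

variable {V : Type} [DecidableEq V]

namespace MvPolynomial

variable {σ R : Type*} [CommSemiring R]

theorem prod_X_eq_monomial_toFinsupp [DecidableEq σ] (s : Finset σ) :
    ∏ i ∈ s, (X i : MvPolynomial σ R) = monomial (Multiset.toFinsupp s.val) 1 := by
  rw [← Multiset.sum_map_singleton s.val, map_multiset_sum, Multiset.map_map]
  simp only [Function.comp_def, Multiset.toFinsupp_singleton]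
  exact (monomial_sum_one s fun i => Finsupp.single i 1).symm

theorem monomial_one_mem_ideal_span_monomial_image [Nontrivial R] {a : σ →₀ ℕ}
    {S : Set (σ →₀ ℕ)} :
    monomial a (1 : R) ∈ Ideal.span ((fun s => monomial s (1 : R)) '' S) ↔ ∃ s ∈ S, s ≤ a := by
  classical
  rw [mem_ideal_span_monomial_image, support_monomial, if_neg one_ne_zero]
  simp

end MvPolynomial

theorem Multiset.toFinsupp_le_toFinsupp {α : Type*} [DecidableEq α] {s t : Multiset α} :
    Multiset.toFinsupp s ≤ Multiset.toFinsupp t ↔ s ≤ t := by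
  rw [← Finsupp.coe_orderIsoMultiset_symm]
  exact Finsupp.orderIsoMultiset.symm.le_iff_le

open MvPolynomial

section FacetIdeal

variable {σ : Type*} (R : Type*) [CommSemiring R]

noncomputable def facetIdeal (S : Set (Finset σ)) : Ideal (MvPolynomial σ R) :=
  Ideal.span ((fun G => ∏ v ∈ G, X v) '' S)

variable {R} [Nontrivial R] [DecidableEq σ] {S : Set (Finset σ)}

theorem monomial_toFinsupp_mem_facetIdeal_iff {t : Multiset σ} :
    monomial (Multiset.toFinsupp t) (1 : R) ∈ facetIdeal R S ↔ ∃ G ∈ S, G.val ≤ t := by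
  have hgens : (fun G => ∏ v ∈ G, (X v : MvPolynomial σ R)) '' S =
      (fun s => monomial s 1) '' ((fun G : Finset σ => Multiset.toFinsupp G.val) '' S) := by
    rw [Set.image_image]
    exact Set.image_congr fun G _ => prod_X_eq_monomial_toFinsupp G
  rw [facetIdeal, hgens, monomial_one_mem_ideal_span_monomial_image]
  simp [Multiset.toFinsupp_le_toFinsupp]

theorem prod_X_mem_facetIdeal_iff {E : Finset σ} :
    ∏ v ∈ E, (X v : MvPolynomial σ R) ∈ facetIdeal R S ↔ ∃ G ∈ S, G ⊆ E := by
  simp_rw [prod_X_eq_monomial_toFinsupp, monomial_toFinsupp_mem_facetIdeal_iff, Finset.val_le_iff]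

theorem prod_X_mem_facetIdeal_colon_iff {E F : Finset σ} :
    ∏ v ∈ E, (X v : MvPolynomial σ R) ∈
        (facetIdeal R S).colon (Ideal.span {∏ v ∈ F, (X v : MvPolynomial σ R)}) ↔
      ∃ G ∈ S, G \ F ⊆ E := by
  rw [Ideal.mem_colon_span_singleton]
  simp_rw [prod_X_eq_monomial_toFinsupp, monomial_mul, mul_one, ← Multiset.toFinsupp_add,
    monomial_toFinsupp_mem_facetIdeal_iff]
  refine exists_congr fun G => and_congr_right fun _ => ?_
  rw [Multiset.le_iff_subset G.nodup, sdiff_le_iff]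
  simp [Multiset.subset_iff, Finset.subset_iff, or_comm]

end FacetIdeal

theorem IsComplex.isAntichain {α : Type} {Δ : Finset (Finset α)} (hΔ : IsComplex Δ) :
    IsAntichain (· ⊆ ·) (Δ : Set (Finset α)) :=
  fun E hE E' hE' hne hsub => hne (hΔ.2 E hE E' hE' hsub)

theorem exists_eq_sdiff_of_facetIdeal_eq_colon {R : Type*} [CommSemiring R] [Nontrivial R]
    {S T : Set (Finset V)} (hT : IsAntichain (· ⊆ ·) T) {F : Finset V}
    (h : facetIdeal R T =
      (facetIdeal R S).colon (Ideal.span {∏ v ∈ F, (X v : MvPolynomial V R)}))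
    {E : Finset V} (hE : E ∈ T) : ∃ G ∈ S, E = G \ F := by
  have hE_mem : ∏ v ∈ E, (X v : MvPolynomial V R) ∈ facetIdeal R T :=
    Ideal.subset_span ⟨E, hE, rfl⟩
  obtain ⟨G, hG, hGE⟩ := prod_X_mem_facetIdeal_colon_iff.1 (h ▸ hE_mem)
  have hGF_mem : ∏ v ∈ G \ F, (X v : MvPolynomial V R) ∈ facetIdeal R T :=
    h ▸ prod_X_mem_facetIdeal_colon_iff.2 ⟨G, hG, subset_rfl⟩
  obtain ⟨E', hE', hE'G⟩ := prod_X_mem_facetIdeal_iff.1 hGF_mem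
  have hE'E : E' = E := hT.eq hE' hE (hE'G.trans hGE)
  exact ⟨G, hG, hGE.antisymm' (hE'E ▸ hE'G)⟩

theorem IsLeaf.image_sdiff {Γ : Finset (Finset V)} {G F : Finset V} (hG : IsLeaf Γ G)
    (hinj : Set.InjOn (· \ F) (Γ : Set (Finset V))) :
    IsLeaf (Γ.image (· \ F)) (G \ F) := by
  obtain ⟨hGΓ, rfl | ⟨G', hG'Γ, hG'G, hG'max⟩⟩ := hG
  · exact ⟨Finset.mem_image_of_mem _ hGΓ, Or.inl (Finset.image_singleton _ _)⟩
  refine ⟨Finset.mem_image_of_mem _ hGΓ, Or.inr ⟨G' \ F, Finset.mem_image_of_mem _ hG'Γ,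
    fun h => hG'G (hinj hG'Γ hGΓ h), ?_⟩⟩
  rintro _ hH hHG
  obtain ⟨H, hHΓ, rfl⟩ := Finset.mem_image.1 hH
  calc G \ F ∩ (H \ F) = (G ∩ H) \ F := inf_sdiff.symm
    _ ⊆ (G ∩ G') \ F := sdiff_le_sdiff_right (hG'max H hHΓ fun h => hHG (h ▸ rfl))
    _ = G \ F ∩ (G' \ F) := inf_sdiff

theorem IsForest.of_forall_exists_sdiff {Δ Δ' : Finset (Finset V)} (hΔ : IsForest Δ)
    (F : Finset V) (hΔ' : ∀ E ∈ Δ', ∃ G ∈ Δ, E = G \ F) : IsForest Δ' := by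
  intro Γ hΓ hΓne
  choose! g hgΔ hg using fun E hE => hΔ' E (hΓ hE)
  have himage : (Γ.image g).image (· \ F) = Γ := by
    rw [Finset.image_image]
    exact (Finset.image_congr fun E hE => (hg E hE).symm).trans Finset.image_id
  have hinj : Set.InjOn (· \ F) (Γ.image g : Set (Finset V)) := by
    rintro _ hG₁ _ hG₂ h
    obtain ⟨E₁, hE₁, rfl⟩ := Finset.mem_image.1 hG₁
    obtain ⟨E₂, hE₂, rfl⟩ := Finset.mem_image.1 hG₂
    have : E₁ = E₂ := (hg E₁ hE₁).trans (h.trans (hg E₂ hE₂).symm)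
    rw [this]
  obtain ⟨G, hG⟩ := hΔ (Γ.image g) (fun G hG => by
    obtain ⟨E, hE, rfl⟩ := Finset.mem_image.1 hG
    exact hgΔ E hE) (hΓne.image g)
  exact ⟨G \ F, himage ▸ hG.image_sdiff hinj⟩

theorem stmt12_general {V : Type} [DecidableEq V] (K : Type) [Field K]
    (Δ : Finset (Finset V)) (hforest : IsForest Δ)
    (F : Finset V)
    (Δ₂ : Finset (Finset V)) (hΔ₂ : IsComplex Δ₂)
    (h : Ideal.span ((fun G => ∏ v ∈ G, (MvPolynomial.X v : MvPolynomial V K)) '' ↑Δ₂)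
        = Submodule.colon
            (Ideal.span ((fun G => ∏ v ∈ G, (MvPolynomial.X v : MvPolynomial V K)) ''
              ↑(Δ.erase F)))
            (Ideal.span {∏ v ∈ F, (MvPolynomial.X v : MvPolynomial V K)})) :
    IsForest Δ₂ ∧ ∀ E ∈ Δ₂, ∃ G ∈ Δ, G ≠ F ∧ E = G \ F := by
  have hsdiff (E : Finset V) (hE : E ∈ Δ₂) : ∃ G ∈ Δ, G ≠ F ∧ E = G \ F := by
    obtain ⟨G, hG, rfl⟩ := exists_eq_sdiff_of_facetIdeal_eq_colon hΔ₂.isAntichain h hE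
    exact ⟨G, Finset.mem_of_mem_erase hG, Finset.ne_of_mem_erase hG, rfl⟩
  refine ⟨hforest.of_forall_exists_sdiff F fun E hE => ?_, hsdiff⟩
  obtain ⟨G, hG, -, hEG⟩ := hsdiff E hE
  exact ⟨G, hG, hEG⟩

/-- Lemma 2.9. Let `Δ` be a forest with facet ideal `I(Δ)`, `F` a facet
with corresponding monomial `f = ∏_{v ∈ F} x_v`, and `J` the ideal generated by the
monomials of the other facets. Any simplicial complex `Δ₂` whose facet ideal equals the
colon ideal `J : f` is again a forest, and its facets are among the sets `G \ F` for
facets `G ≠ F` of `Δ`. -/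
theorem stmt12 {V : Type} [DecidableEq V] (K : Type) [Field K]
    (Δ : Finset (Finset V)) (hΔ : IsComplex Δ) (hforest : IsForest Δ)
    (F : Finset V) (hF : F ∈ Δ)
    (Δ₂ : Finset (Finset V)) (hΔ₂ : IsComplex Δ₂)
    (h : Ideal.span ((fun G => ∏ v ∈ G, (MvPolynomial.X v : MvPolynomial V K)) '' ↑Δ₂)
        = Submodule.colon
            (Ideal.span ((fun G => ∏ v ∈ G, (MvPolynomial.X v : MvPolynomial V K)) ''
              ↑(Δ.erase F)))
            (Ideal.span {∏ v ∈ F, (MvPolynomial.X v : MvPolynomial V K)})) :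
    IsForest Δ₂ ∧ ∀ E ∈ Δ₂, ∃ G ∈ Δ, G ≠ F ∧ E = G \ F :=
  stmt12_general K Δ hforest F Δ₂ hΔ₂ h
end

section
/- Let Δ be a d-dimensional pure tree connected in codimension 1, V the set of faces of dimension d-1, and for G ∈ V let deg(G) be the number of facets containing G. Then the number of facets of Δ minus 1 equals (Σ_{G∈V} deg(G)) − |V|. -/
variable {V : Type} [DecidableEq V]

/-!
Call the `d`-subsets of facets the ridges. Removing a leaf `F` with branch `G` from a pure
`d`-dimensional tree removes exactly `d` ridges: connectivity in codimension 1 forces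
`F ∩ G` to be a ridge, and the leaf condition makes it the only ridge of `F` lying in another
facet. Moreover, every ridge adjacent to `F` is also adjacent to `G`, so the remaining complex
is still connected in codimension 1. By induction the number of ridges is `d · |Δ| + 1`, while
double counting shows that the degrees of the ridges sum to `(d + 1) · |Δ|`.
-/

open Finset Relation

def ridges (Δ : Finset (Finset V)) (d : ℕ) : Finset (Finset V) :=
  Δ.biUnion fun F => F.powersetCard d

def RidgeAdj (Δ : Finset (Finset V)) (d : ℕ) (F G : Finset V) : Prop :=
  F ∈ Δ ∧ G ∈ Δ ∧ (F ∩ G).card = d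

def RidgeConnected (Δ : Finset (Finset V)) (d : ℕ) : Prop :=
  ∀ F ∈ Δ, ∀ G ∈ Δ, ReflTransGen (RidgeAdj Δ d) F G

section

variable {Δ : Finset (Finset V)} {d : ℕ}

theorem ridges_insert (F : Finset V) :
    ridges (insert F Δ) d = F.powersetCard d ∪ ridges Δ d :=
  biUnion_insert

theorem card_ridges_insert {F S : Finset V} (hF : F.card = d + 1)
    (hinter : F.powersetCard d ∩ ridges Δ d = {S}) :
    (ridges (insert F Δ) d).card = (ridges Δ d).card + d := by
  have h := card_union_add_card_inter (F.powersetCard d) (ridges Δ d)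
  rw [hinter, card_singleton, card_powersetCard, hF, Nat.choose_succ_self_right] at h
  rw [ridges_insert]
  omega

theorem filter_subset_ridges {F : Finset V} (hF : F ∈ Δ) :
    (ridges Δ d).filter (· ⊆ F) = F.powersetCard d := by
  ext S
  simp only [ridges, mem_filter, mem_biUnion, mem_powersetCard]
  constructor
  · rintro ⟨⟨-, -, -, hS⟩, hSF⟩
    exact ⟨hSF, hS⟩
  · rintro ⟨hSF, hS⟩
    exact ⟨⟨F, hF, hSF, hS⟩, hSF⟩

theorem IsPure.sum_card_filter_superset_ridges (hpure : IsPure Δ d) :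
    ∑ G ∈ ridges Δ d, (Δ.filter fun F => G ⊆ F).card = (d + 1) * Δ.card :=
  calc ∑ G ∈ ridges Δ d, (Δ.filter fun F => G ⊆ F).card
      = ∑ F ∈ Δ, ((ridges Δ d).filter (· ⊆ F)).card :=
        sum_card_bipartiteAbove_eq_sum_card_bipartiteBelow _
    _ = (d + 1) * Δ.card := by
        rw [sum_const_nat fun F hF => ?_, mul_comm]
        rw [filter_subset_ridges hF, card_powersetCard, hpure F hF, Nat.choose_succ_self_right]

theorem IsPure.card_inter_le_of_ne (hpure : IsPure Δ d) {F G : Finset V} (hF : F ∈ Δ)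
    (hG : G ∈ Δ) (hne : F ≠ G) : (F ∩ G).card ≤ d := by
  by_contra! h
  have hFG : F ∩ G = F :=
    eq_of_subset_of_card_le inter_subset_left (by rw [hpure F hF]; omega)
  exact hne (eq_of_subset_of_card_le (inter_eq_left.mp hFG) (by rw [hpure F hF, hpure G hG]))

theorem ConnCodim1.ridgeConnected (hcc : ConnCodim1 Δ) (hpure : IsPure Δ d) :
    RidgeConnected Δ d := by
  intro F hF G hG
  obtain ⟨n, c, ⟨⟨hmem, -⟩, -, hstep⟩, rfl, rfl⟩ :=
    hcc F hF G hG (by rw [hpure F hF, hpure G hG])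
  suffices ∀ i ≤ n, ReflTransGen (RidgeAdj Δ d) (c 0) (c i) from this n le_rfl
  intro i hi
  induction i with
  | zero => exact .refl
  | succ i ih =>
    refine (ih (by omega)).tail ⟨hmem i (by omega), hmem (i + 1) hi, ?_⟩
    have := hstep i hi
    have := hpure _ (hmem (i + 1) hi)
    omega

end

def IsLeafBranch (Δ : Finset (Finset V)) (F G : Finset V) : Prop :=
  F ∈ Δ ∧ G ∈ Δ ∧ G ≠ F ∧ ∀ H ∈ Δ, H ≠ F → F ∩ H ⊆ F ∩ G

section Leaf

variable {Δ : Finset (Finset V)} {d : ℕ} {F G : Finset V}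

theorem IsLeafBranch.card_inter (hb : IsLeafBranch Δ F G) (hpure : IsPure Δ d)
    (hconn : RidgeConnected Δ d) : (F ∩ G).card = d := by
  obtain ⟨hF, hG, hGF, hbranch⟩ := hb
  obtain rfl | ⟨H, ⟨-, hH, hFH⟩, -⟩ := (hconn F hF G hG).cases_head
  · exact absurd rfl hGF
  have hHF : H ≠ F := by
    rintro rfl
    rw [inter_self, hpure H hF] at hFH
    omega
  exact le_antisymm (hpure.card_inter_le_of_ne hF hG hGF.symm)
    (hFH ▸ card_le_card (hbranch H hH hHF))

theorem IsLeafBranch.eq_or_ridgeAdj (hb : IsLeafBranch Δ F G) (hpure : IsPure Δ d)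
    (hFG : (F ∩ G).card = d) {H : Finset V} (hH : H ∈ Δ) (hHF : H ≠ F)
    (hFH : (F ∩ H).card = d) : H = G ∨ RidgeAdj Δ d G H := by
  obtain ⟨-, hG, -, hbranch⟩ := hb
  refine or_iff_not_imp_left.mpr fun hHG => ⟨hG, hH, ?_⟩
  have hsame : F ∩ H = F ∩ G := eq_of_subset_of_card_le (hbranch H hH hHF) (by omega)
  have hsub : F ∩ G ⊆ G ∩ H := subset_inter inter_subset_right (hsame ▸ inter_subset_right)
  exact le_antisymm (hpure.card_inter_le_of_ne hG hH (Ne.symm hHG)) (hFG ▸ card_le_card hsub)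

theorem IsLeafBranch.powersetCard_inter_ridges_erase (hb : IsLeafBranch Δ F G)
    (hFG : (F ∩ G).card = d) : F.powersetCard d ∩ ridges (Δ.erase F) d = {F ∩ G} := by
  obtain ⟨-, hG, hGF, hbranch⟩ := hb
  ext S
  simp only [ridges, mem_inter, mem_powersetCard, mem_biUnion, mem_erase, mem_singleton]
  constructor
  · rintro ⟨⟨hSF, hS⟩, H, ⟨hHF, hH⟩, hSH, -⟩
    exact eq_of_subset_of_card_le ((subset_inter hSF hSH).trans (hbranch H hH hHF)) (by omega)
  · rintro rfl
    exact ⟨⟨inter_subset_left, hFG⟩, G, ⟨hGF, hG⟩, inter_subset_right, hFG⟩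

theorem RidgeConnected.erase_leaf (hconn : RidgeConnected Δ d) (hb : IsLeafBranch Δ F G)
    (hpure : IsPure Δ d) : RidgeConnected (Δ.erase F) d := by
  have hFG := hb.card_inter hpure hconn
  have hG' : G ∈ Δ.erase F := mem_erase.mpr ⟨hb.2.2.1, hb.2.1⟩
  let reroute : Finset V → Finset V := fun X => if X = F then G else X
  have hstep : ∀ X Y, RidgeAdj Δ d X Y →
      ReflTransGen (RidgeAdj (Δ.erase F) d) (reroute X) (reroute Y) := by
    rintro X Y ⟨hX, hY, hXY⟩
    by_cases hXF : X = F <;> by_cases hYF : Y = F <;>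
      simp only [reroute, hXF, hYF, if_true, if_false]
    · exact .refl
    · subst hXF
      obtain rfl | ⟨-, -, hGY⟩ := hb.eq_or_ridgeAdj hpure hFG hY hYF hXY
      · exact .refl
      · exact .single ⟨hG', mem_erase.mpr ⟨hYF, hY⟩, hGY⟩
    · subst hYF
      obtain rfl | ⟨-, -, hGX⟩ := hb.eq_or_ridgeAdj hpure hFG hX hXF (by rwa [inter_comm])
      · exact .refl
      · exact .single ⟨mem_erase.mpr ⟨hXF, hX⟩, hG', by rwa [inter_comm]⟩
    · exact .single ⟨mem_erase.mpr ⟨hXF, hX⟩, mem_erase.mpr ⟨hYF, hY⟩, hXY⟩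
  intro X hX Y hY
  simpa [reroute, Function.onFun, ne_of_mem_erase hX, ne_of_mem_erase hY] using
    (hconn X (mem_of_mem_erase hX) Y (mem_of_mem_erase hY)).lift' reroute hstep

end Leaf

theorem card_ridges_of_hasLeafProp {Δ : Finset (Finset V)} {d : ℕ} (hpure : IsPure Δ d)
    (hleaf : HasLeafProp Δ) (hne : Δ.Nonempty) (hconn : RidgeConnected Δ d) :
    (ridges Δ d).card = d * Δ.card + 1 := by
  induction Δ using Finset.strongInduction with
  | H Δ ih =>
    obtain ⟨F, hF, rfl | ⟨G, hG, hGF, hbranch⟩⟩ := hleaf Δ Subset.rfl hne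
    · simp [ridges, hpure F (mem_singleton_self F), Nat.choose_succ_self_right]
    have hb : IsLeafBranch Δ F G := ⟨hF, hG, hGF, hbranch⟩
    have hFG := hb.card_inter hpure hconn
    have hsub : Δ.erase F ⊆ Δ := erase_subset F Δ
    have ih' := ih (Δ.erase F) (erase_ssubset hF) (fun H hH => hpure H (hsub hH))
      (fun Γ hΓ => hleaf Γ (hΓ.trans hsub)) ⟨G, mem_erase.mpr ⟨hGF, hG⟩⟩
      (hconn.erase_leaf hb hpure)
    calc (ridges Δ d).card
        = (ridges (Δ.erase F) d).card + d := by
          rw [← card_ridges_insert (hpure F hF)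
            (hb.powersetCard_inter_ridges_erase hFG), insert_erase hF]
      _ = d * Δ.card + 1 := by
          rw [ih', ← card_erase_add_one hF]
          ring

theorem stmt17_general {V : Type} [DecidableEq V] (Δ : Finset (Finset V))
    (d : ℕ) (hpure : IsPure Δ d) (htree : IsTree Δ) (hcc : ConnCodim1 Δ) :
    (Δ.card : ℤ) - 1 =
      (∑ G ∈ Δ.biUnion fun F => F.powersetCard d, ((Δ.filter fun F => G ⊆ F).card : ℤ))
        - ((Δ.biUnion fun F => F.powersetCard d).card : ℤ) := by
  obtain ⟨hne, -, hleaf⟩ := htree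
  have hcard := card_ridges_of_hasLeafProp hpure hleaf hne (hcc.ridgeConnected hpure)
  have hdeg := hpure.sum_card_filter_superset_ridges
  rw [ridges] at hcard hdeg
  rw [← Nat.cast_sum, hdeg, hcard]
  push_cast
  ring

/-- Lemma 3.5. For a `d`-dimensional pure tree connected in codimension 1,
with `V` the set of `(d-1)`-dimensional faces (the `d`-element subsets of facets) and
`deg G` the number of facets containing `G`: `|F(Δ)| - 1 = (Σ_{G ∈ V} deg G) - |V|`. -/
theorem stmt17 {V : Type} [DecidableEq V] (Δ : Finset (Finset V)) (hΔ : IsComplex Δ)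
    (d : ℕ) (hpure : IsPure Δ d) (htree : IsTree Δ) (hcc : ConnCodim1 Δ) :
    (Δ.card : ℤ) - 1 =
      (∑ G ∈ Δ.biUnion fun F => F.powersetCard d, ((Δ.filter fun F => G ⊆ F).card : ℤ))
        - ((Δ.biUnion fun F => F.powersetCard d).card : ℤ) :=
  stmt17_general Δ d hpure htree hcc
end
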